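/- arXiv:1408.2639 — 3 statements merged into one kernel-verified Lean document; each statement's English description precedes it below -/
import Mathlib

section
/- Let G be a finite graph (with a loop at every vertex) having no universal vertices and no true twins, let {u, v} be a circular pair of G, and let G' be a circular completion of G. Then {u, v} is also a circular pair of G'. -/
/-!
Graphs here are finite, undirected, without parallel edges, and have a loop at
every vertex.  We model them as symmetric reflexive relations.
-/

structure LoopGraph (V : Type) where
  Adj : V → V → Prop
  symm : ∀ u v, Adj u v → Adj v u
  refl : ∀ u, Adj u u

namespace LoopGraph

variable {V W : Type}

/-- Closed neighbourhood `N[u]`. -/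
def nbhd (G : LoopGraph V) (u : V) : Set V := {v | G.Adj u v}

/-- `u` is a universal vertex. -/
def Universal (G : LoopGraph V) (u : V) : Prop := ∀ v, G.Adj u v

/-- `u ≠ v` are true twins if `N[u] = N[v]`. -/
def TrueTwins (G : LoopGraph V) (u v : V) : Prop := u ≠ v ∧ G.nbhd u = G.nbhd v

/-- `uv` is an inclusion edge: it is an edge and `N[u] ⊆ N[v]` or `N[v] ⊆ N[u]`. -/
def InclusionEdge (G : LoopGraph V) (u v : V) : Prop :=
  G.Adj u v ∧ (G.nbhd u ⊆ G.nbhd v ∨ G.nbhd v ⊆ G.nbhd u)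

/-- `u` overlaps `v`: they are adjacent and their closed neighbourhoods are incomparable. -/
def Overlaps (G : LoopGraph V) (u v : V) : Prop :=
  G.Adj u v ∧ ¬ G.nbhd u ⊆ G.nbhd v ∧ ¬ G.nbhd v ⊆ G.nbhd u

/-- `{u,v}` is a spanning pair. -/
def SpanningPair (G : LoopGraph V) (u v : V) : Prop :=
  (∀ x, ¬ G.Adj v x → G.nbhd x ⊆ G.nbhd u) ∧
  (∀ y, ¬ G.Adj u y → G.nbhd y ⊆ G.nbhd v)

/-- `uv` is a 2-overlap edge: an overlap edge forming a spanning pair. -/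
def TwoOverlapEdge (G : LoopGraph V) (u v : V) : Prop :=
  G.Overlaps u v ∧ G.SpanningPair u v

/-- `uv` is a 1-overlap edge: an overlap edge not forming a spanning pair. -/
def OneOverlapEdge (G : LoopGraph V) (u v : V) : Prop :=
  G.Overlaps u v ∧ ¬ G.SpanningPair u v

/-- `{u,v}` is a circular pair: a non-adjacent spanning pair. -/
def CircularPair (G : LoopGraph V) (u v : V) : Prop :=
  G.SpanningPair u v ∧ ¬ G.Adj u v

/-- Every vertex belongs to some circular pair. -/
def CircularlyPaired (G : LoopGraph V) : Prop := ∀ u, ∃ v, G.CircularPair u v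

/-- A walk with `k` edges: vertices `P 0, …, P k` with consecutive vertices adjacent. -/
def IsWalk (G : LoopGraph V) (k : ℕ) (P : ℕ → V) : Prop :=
  ∀ i < k, G.Adj (P i) (P (i + 1))

/-- Vertex `z` avoids the edge `ab`: every neighbour of `z` among `a, b` overlaps `z`,
and if `z` overlaps both `a` and `b` then `a, b` do not overlap each other. -/
def AvoidsEdge (G : LoopGraph V) (z a b : V) : Prop :=
  (G.Adj z a → G.Overlaps z a) ∧ (G.Adj z b → G.Overlaps z b) ∧
  (G.Overlaps z a → G.Overlaps z b → ¬ G.Overlaps a b)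

/-- Vertex `z` and the walk `P` (with `k` edges) avoid each other. -/
def AvoidsWalk (G : LoopGraph V) (z : V) (k : ℕ) (P : ℕ → V) : Prop :=
  (∀ i ≤ k, G.Adj z (P i) → G.Overlaps z (P i)) ∧
  (∀ i < k, G.Overlaps z (P i) → G.Overlaps z (P (i + 1)) →
    ¬ G.Overlaps (P i) (P (i + 1)))

/-- The walks `P` and `Q` (both with `k` edges) avoid each other. -/
def WalksAvoid (G : LoopGraph V) (k : ℕ) (P Q : ℕ → V) : Prop :=
  ∀ i < k, G.AvoidsEdge (P i) (Q i) (Q (i + 1)) ∧ G.AvoidsEdge (Q (i + 1)) (P i) (P (i + 1))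

/-- `{x,y}` is a `z`-invertible pair, i.e. an invertible pair anchored at `z`. -/
def ZInvertiblePair (G : LoopGraph V) (z x y : V) : Prop :=
  x ≠ y ∧ x ≠ z ∧ y ≠ z ∧
  ∃ k, ∃ P Q : ℕ → V, G.IsWalk k P ∧ G.IsWalk k Q ∧
    P 0 = x ∧ P k = y ∧ Q 0 = y ∧ Q k = x ∧
    G.WalksAvoid k P Q ∧ G.AvoidsWalk z k P ∧ G.AvoidsWalk z k Q

/-- `G` contains an anchored invertible pair. -/
def HasAnchoredInvertiblePair (G : LoopGraph V) : Prop :=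
  ∃ z x y, G.ZInvertiblePair z x y

end LoopGraph

/-!
Circular arcs: the circle is modelled as the half-open interval `[0,1)`;
an arc is described by its left and right endpoints (clockwise = increasing),
wrapping around if necessary.
-/

/-- Membership of the point `t` in the clockwise arc from `l` to `r`. -/
def arcMem (l r t : ℝ) : Prop :=
  (l ≤ r ∧ l ≤ t ∧ t ≤ r) ∨ (r < l ∧ (l ≤ t ∨ t ≤ r))

/-- The arc `[l₁,r₁]` is contained in the arc `[l₂,r₂]`. -/
def arcSubset (l₁ r₁ l₂ r₂ : ℝ) : Prop :=
  ∀ t ∈ Set.Ico (0 : ℝ) 1, arcMem l₁ r₁ t → arcMem l₂ r₂ t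

/-- The arc `[lu,ru]` properly contains the arc `[lv,rv]`. -/
def arcProperContains (lu ru lv rv : ℝ) : Prop :=
  arcSubset lv rv lu ru ∧ ¬ arcSubset lu ru lv rv

/-- The arcs `[lu,ru]` and `[lv,rv]` together cover the whole circle. -/
def arcsCover (lu ru lv rv : ℝ) : Prop :=
  ∀ t ∈ Set.Ico (0 : ℝ) 1, arcMem lu ru t ∨ arcMem lv rv t

/-- `b` lies strictly between `a` and `c` in the clockwise cyclic order on `[0,1)`. -/
def cycBtw (a b c : ℝ) : Prop :=
  (a < b ∧ b < c) ∨ (b < c ∧ c < a) ∨ (c < a ∧ a < b)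

/-- The four points `a, b, c, d` of `[0,1)` occur in this clockwise cyclic order. -/
def cyc4 (a b c d : ℝ) : Prop := cycBtw a b c ∧ cycBtw a c d

namespace LoopGraph

variable {V W : Type}

/-- `(l, r)` is a circular-arc representation of `G`: all endpoints are distinct and
two vertices are adjacent iff their arcs intersect. -/
def IsCARep (G : LoopGraph V) (l r : V → ℝ) : Prop :=
  (∀ v, l v ∈ Set.Ico (0 : ℝ) 1) ∧ (∀ v, r v ∈ Set.Ico (0 : ℝ) 1) ∧
  Function.Injective (Sum.elim l r) ∧
  ∀ u v, (G.Adj u v ↔ ∃ t ∈ Set.Ico (0 : ℝ) 1,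
    arcMem (l u) (r u) t ∧ arcMem (l v) (r v) t)

/-- `G` is a circular-arc graph. -/
def IsCircularArc (G : LoopGraph V) : Prop := ∃ l r : V → ℝ, G.IsCARep l r

/-- A normalized circular-arc representation of `G`. -/
def IsNormalizedRep (G : LoopGraph V) (l r : V → ℝ) : Prop :=
  G.IsCARep l r ∧
  ∀ u v, G.Adj u v → u ≠ v →
    (arcProperContains (l u) (r u) (l v) (r v) ↔ G.nbhd v ⊆ G.nbhd u) ∧
    (arcsCover (l u) (r u) (l v) (r v) ↔ G.TwoOverlapEdge u v)

/-- A circular-arc representation of the induced subgraph `G[X]` which is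
normalized with respect to `G`. -/
def IsNormalizedRepOn (G : LoopGraph V) (X : Set V) (l r : V → ℝ) : Prop :=
  (∀ v ∈ X, l v ∈ Set.Ico (0 : ℝ) 1) ∧ (∀ v ∈ X, r v ∈ Set.Ico (0 : ℝ) 1) ∧
  Set.InjOn l X ∧ Set.InjOn r X ∧ (∀ u ∈ X, ∀ v ∈ X, l u ≠ r v) ∧
  (∀ u ∈ X, ∀ v ∈ X,
    (G.Adj u v ↔ ∃ t ∈ Set.Ico (0 : ℝ) 1,
      arcMem (l u) (r u) t ∧ arcMem (l v) (r v) t)) ∧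
  (∀ u ∈ X, ∀ v ∈ X, G.Adj u v → u ≠ v →
    (arcProperContains (l u) (r u) (l v) (r v) ↔ G.nbhd v ⊆ G.nbhd u) ∧
    (arcsCover (l u) (r u) (l v) (r v) ↔ G.TwoOverlapEdge u v))

/-! Circular completions. -/

/-- `f` exhibits `G` as an induced subgraph of `H`. -/
def InducedEmb (G : LoopGraph V) (H : LoopGraph W) (f : V → W) : Prop :=
  Function.Injective f ∧ ∀ u v, (G.Adj u v ↔ H.Adj (f u) (f v))

/-- Every edge of `G` has the same type (inclusion / 1-overlap / 2-overlap)
in `G` and in `H`. -/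
def SameEdgeTypes (G : LoopGraph V) (H : LoopGraph W) (f : V → W) : Prop :=
  ∀ u v, G.Adj u v →
    ((G.InclusionEdge u v ↔ H.InclusionEdge (f u) (f v)) ∧
     (G.OneOverlapEdge u v ↔ H.OneOverlapEdge (f u) (f v)) ∧
     (G.TwoOverlapEdge u v ↔ H.TwoOverlapEdge (f u) (f v)))

/-- `H` (with embedding `f`) is a circular completion of `G`: a circularly-paired
graph with the fewest possible vertices containing `G` as an induced subgraph with
all edge types preserved. -/
def IsCircularCompletion (G : LoopGraph V) (H : LoopGraph W) (f : V → W) : Prop :=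
  Finite W ∧ G.InducedEmb H f ∧ G.SameEdgeTypes H f ∧ H.CircularlyPaired ∧
  ∀ (W' : Type) (H' : LoopGraph W') (f' : V → W'), Finite W' →
    G.InducedEmb H' f' → G.SameEdgeTypes H' f' → H'.CircularlyPaired →
    Nat.card W ≤ Nat.card W'

/-! The anchored Δ-knotting graph. -/

/-- `A(z)`: vertices nonadjacent to `z` or overlapping `z`. -/
def Aset (G : LoopGraph V) (z : V) : Set V := {u | ¬ G.Adj z u ∨ G.Overlaps z u}

/-- `x` and `y` are `uz`-connected. -/
def UZConnected (G : LoopGraph V) (u z x y : V) : Prop :=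
  ¬ G.InclusionEdge x u ∧ ¬ G.InclusionEdge y u ∧ ¬ G.InclusionEdge x z ∧
  ¬ G.InclusionEdge y z ∧ ¬ G.InclusionEdge u z ∧
  ∃ k, ∃ P : ℕ → V, G.IsWalk k P ∧ P 0 = x ∧ P k = y ∧
    G.AvoidsWalk u k P ∧ G.AvoidsWalk z k P

/-- `X` is a `uz`-component: a maximal set of pairwise `uz`-connected vertices. -/
def IsUZComponent (G : LoopGraph V) (u z : V) (X : Set V) : Prop :=
  X.Nonempty ∧ (∀ x ∈ X, ∀ y ∈ X, G.UZConnected u z x y) ∧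
  ∀ Y : Set V, X ⊆ Y → (∀ x ∈ Y, ∀ y ∈ Y, G.UZConnected u z x y) → Y = X

/-- Vertices of the `z`-anchored Δ-knotting graph: copies `(u, X)` of `u ∈ A(z)`,
one for each `uz`-component `X`. -/
def KnotVertex (G : LoopGraph V) (z : V) (p : V × Set V) : Prop :=
  p.1 ∈ G.Aset z ∧ G.IsUZComponent p.1 z p.2

/-- Edges of the `z`-anchored Δ-knotting graph: for each edge `uv` of `G` with
`u, v ∈ A(z)`, an edge between the copy of `u` for `X` and the copy of `v` for `Y`
whenever `v ∈ X` and `u ∈ Y`. -/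
def KnotAdj (G : LoopGraph V) (z : V) (p q : V × Set V) : Prop :=
  G.Adj p.1 q.1 ∧ p.1 ∈ G.Aset z ∧ q.1 ∈ G.Aset z ∧ q.1 ∈ p.2 ∧ p.1 ∈ q.2

/-- The `z`-anchored Δ-knotting graph of `G` is bipartite (it is 2-colourable). -/
def KnotBipartite (G : LoopGraph V) (z : V) : Prop :=
  ∃ c : V × Set V → Bool, ∀ p q, G.KnotVertex z p → G.KnotVertex z q →
    G.KnotAdj z p q → c p ≠ c q

/-! Non-inverting sets. -/

/-- `X` is a non-inverting set of `G`. -/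
def NonInvertingSet (G : LoopGraph V) (X : Set V) : Prop :=
  (∀ u ∈ X, ∀ v ∈ X, ¬ G.TwoOverlapEdge u v) ∧
  ¬ ∃ x ∈ X, ∃ y ∈ X, ∃ k, 0 < k ∧ ∃ P Q : ℕ → V,
      G.IsWalk k P ∧ G.IsWalk k Q ∧ (∀ i ≤ k, P i ∈ X) ∧ (∀ i ≤ k, Q i ∈ X) ∧
      P 0 = x ∧ P k = y ∧ Q 0 = y ∧ Q k = x ∧ G.WalksAvoid k P Q

end LoopGraph

/-!
Edge-labelled graphs: graphs (with loops) in which every edge is labelled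
inclusion or overlap, loops being labelled inclusion.
-/

structure ELGraph (V : Type) where
  Adj : V → V → Prop
  symm : ∀ u v, Adj u v → Adj v u
  refl : ∀ u, Adj u u
  /-- `Ovl u v` means the edge `uv` is labelled as an overlap edge. -/
  Ovl : V → V → Prop
  ovl_symm : ∀ u v, Ovl u v → Ovl v u
  ovl_adj : ∀ u v, Ovl u v → Adj u v
  ovl_irrefl : ∀ u, ¬ Ovl u u

namespace ELGraph

variable {V : Type}

/-- Closed neighbourhood `N[u]`. -/
def nbhd (G : ELGraph V) (u : V) : Set V := {v | G.Adj u v}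

/-- `uv` is (labelled as) an inclusion edge. -/
def InclEdge (G : ELGraph V) (u v : V) : Prop := G.Adj u v ∧ ¬ G.Ovl u v

/-- A walk with `k` edges. -/
def IsWalk (G : ELGraph V) (k : ℕ) (P : ℕ → V) : Prop :=
  ∀ i < k, G.Adj (P i) (P (i + 1))

/-- `z` avoids the edge `ab`: every neighbour of `z` among `a, b` overlaps `z`, and if
`z` overlaps both `a` and `b` then the edge `ab` is an inclusion edge. -/
def AvoidsEdge (G : ELGraph V) (z a b : V) : Prop :=
  (G.Adj z a → G.Ovl z a) ∧ (G.Adj z b → G.Ovl z b) ∧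
  (G.Ovl z a → G.Ovl z b → ¬ G.Ovl a b)

/-- The walks `P` and `Q` (both with `k` edges) avoid each other. -/
def WalksAvoid (G : ELGraph V) (k : ℕ) (P Q : ℕ → V) : Prop :=
  ∀ i < k, G.AvoidsEdge (P i) (Q i) (Q (i + 1)) ∧ G.AvoidsEdge (Q (i + 1)) (P i) (P (i + 1))

/-- The ordered pair `p` is related to the ordered pair `q`: there exist a walk from
`p.1` to `q.1` and a walk from `p.2` to `q.2`, of the same (positive) length, that
avoid each other. -/
def Related (G : ELGraph V) (p q : V × V) : Prop :=
  ∃ k, 0 < k ∧ ∃ P Q : ℕ → V, G.IsWalk k P ∧ G.IsWalk k Q ∧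
    P 0 = p.1 ∧ Q 0 = p.2 ∧ P k = q.1 ∧ Q k = q.2 ∧ G.WalksAvoid k P Q

/-- A Δ-implication class: a maximal set of pairwise related ordered pairs. -/
def IsDeltaClass (G : ELGraph V) (A : Set (V × V)) : Prop :=
  A.Nonempty ∧ (∀ p ∈ A, ∀ q ∈ A, G.Related p q) ∧
  ∀ B : Set (V × V), A ⊆ B → (∀ p ∈ B, ∀ q ∈ B, G.Related p q) → B = A

/-- `A⁻¹ = {(u,v) : (v,u) ∈ A}`. -/
def inv (A : Set (V × V)) : Set (V × V) := {p | p.swap ∈ A}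

/-- `span A`: the set of vertices incident to pairs of `A`. -/
def span (A : Set (V × V)) : Set V := {v | ∃ p ∈ A, v = p.1 ∨ v = p.2}

/-- `S` induces a clique. -/
def IsClique (G : ELGraph V) (S : Set V) : Prop := ∀ a ∈ S, ∀ b ∈ S, G.Adj a b

/-- A Δ-module. -/
def IsDeltaModule (G : ELGraph V) (S : Set V) : Prop :=
  S.Nonempty ∧
  (∀ x, x ∉ S →
    ((∀ s ∈ S, ¬ G.Adj x s) ∨ (∀ s ∈ S, G.InclEdge x s) ∨ (∀ s ∈ S, G.Ovl x s))) ∧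
  (¬ G.IsClique S → ∀ x, x ∉ S → ∀ s ∈ S, ¬ G.Ovl x s)

/-- A trivial Δ-module: the whole vertex set or a single vertex. -/
def TrivialModule (S : Set V) : Prop := S = Set.univ ∨ ∃ a : V, S = {a}

/-- `{a,b}` is a Δ-invertible pair: `(a,b)` is related to `(b,a)`. -/
def DeltaInvertiblePair (G : ELGraph V) (a b : V) : Prop := G.Related (a, b) (b, a)

/-- An interval ordering of an edge-labelled graph. -/
def IsIntervalOrdering (G : ELGraph V) (lt : V → V → Prop) : Prop :=
  IsStrictTotalOrder V lt ∧
  ¬ ∃ a b c, lt a b ∧ lt b c ∧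
    ((¬ G.Adj a b ∧ G.Adj a c) ∨
     (G.InclEdge a b ∧ ¬ G.Adj a c ∧ G.Adj b c) ∨
     (G.Ovl a b ∧ G.Adj a c ∧ ¬ G.Adj b c) ∨
     (G.Ovl a b ∧ G.Ovl b c ∧ G.InclEdge a c) ∨
     (G.InclEdge a b ∧ G.InclEdge b c ∧ G.Ovl a c))

/-- An interval representation of `G` consistent with its labelling. -/
def IsConsistentIntervalRep (G : ELGraph V) (l r : V → ℝ) : Prop :=
  (∀ v, l v ≤ r v) ∧
  (∀ u v, (G.Adj u v ↔ (Set.Icc (l u) (r u) ∩ Set.Icc (l v) (r v)).Nonempty)) ∧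
  (∀ u v, (G.Ovl u v ↔
    ((Set.Icc (l u) (r u) ∩ Set.Icc (l v) (r v)).Nonempty ∧
     ¬ Set.Icc (l u) (r u) ⊆ Set.Icc (l v) (r v) ∧
     ¬ Set.Icc (l v) (r v) ⊆ Set.Icc (l u) (r u))))

/-- A consistently edge-labelled graph: there is a transitive orientation `D` of its
inclusion edges (between distinct vertices) such that `D u v → N[v] ⊆ N[u]`. -/
def ConsistentlyLabelled (G : ELGraph V) : Prop :=
  ∃ D : V → V → Prop,
    (∀ u v, D u v → u ≠ v ∧ G.InclEdge u v) ∧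
    (∀ u v, u ≠ v → G.InclEdge u v → (D u v ↔ ¬ D v u)) ∧
    (∀ u v w, D u v → D v w → D u w) ∧
    (∀ u v, D u v → G.nbhd v ⊆ G.nbhd u)

end ELGraph

namespace LoopGraph

variable {V W : Type}

-- ### auxiliary lemmas

lemma SpanningPair.symm' {H : LoopGraph W} {a b : W} (h : H.SpanningPair a b) :
    H.SpanningPair b a := ⟨h.2, h.1⟩

lemma CircularPair.symm' {H : LoopGraph W} {a b : W} (h : H.CircularPair a b) :
    H.CircularPair b a := ⟨h.1.symm', fun hab => h.2 (H.symm _ _ hab)⟩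

lemma partner_nbhd_eq {H : LoopGraph W} {x y y' : W} (h : H.CircularPair x y)
    (h' : H.CircularPair x y') : H.nbhd y = H.nbhd y' :=
  Set.Subset.antisymm (h'.1.2 y h.2) (h.1.2 y' h'.2)

lemma cp_of_nbhd_subset (H : LoopGraph W) {x y p : W} (hcp : H.CircularPair x p)
    (hnadj : ¬ H.Adj x y) (hsub : H.nbhd p ⊆ H.nbhd y) : H.CircularPair x y :=
  ⟨⟨fun z hz => hcp.1.1 z fun h => hz (hsub h),
    fun z hz => (hcp.1.2 z hz).trans hsub⟩, hnadj⟩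

lemma lift_spanning_incl (G : LoopGraph V) (H : LoopGraph W) (f : V → W)
    (ht : ∀ a b, ¬ G.TrueTwins a b)
    (hemb : G.InducedEmb H f) (hsame : G.SameEdgeTypes H f)
    {u v : V} (hsp : G.SpanningPair u v) :
    ∀ a : V, ¬ H.Adj (f v) (f a) → H.nbhd (f a) ⊆ H.nbhd (f u) := by
  intro a hna
  by_cases hau : a = u
  · subst hau; exact Set.Subset.refl _
  have hGva : ¬ G.Adj v a := fun h => hna ((hemb.2 v a).mp h)
  have hGau : G.Adj a u := by
    by_contra hno
    have h1 : ¬ G.Adj u a := fun h => hno (G.symm _ _ h)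
    exact hGva (hsp.2 a h1 (G.refl a))
  have hGsub : G.nbhd a ⊆ G.nbhd u := hsp.1 a hGva
  have hIncl : G.InclusionEdge a u := ⟨hGau, Or.inl hGsub⟩
  rcases ((hsame a u hGau).1.mp hIncl).2 with h | h
  · exact h
  · exact absurd ⟨hau, Set.Subset.antisymm hGsub
      (fun t htu => (hemb.2 a t).mpr (h ((hemb.2 u t).mp htu)))⟩ (ht a u)

-- ### vertex deletion: a minimal completion has no true twins

def delVertex (H : LoopGraph W) (d : W) : LoopGraph {x : W // x ≠ d} where
  Adj a b := H.Adj a.1 b.1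
  symm a b h := H.symm _ _ h
  refl a := H.refl _

lemma no_twins_aux (G : LoopGraph V) (H : LoopGraph W) (f : V → W)
    (ht : ∀ a b, ¬ G.TrueTwins a b) (hcomp : G.IsCircularCompletion H f) :
    ∀ c d : W, H.nbhd c = H.nbhd d → c = d := by
  obtain ⟨hfin, hemb, hsame, hcirc, hmin⟩ := hcomp
  have inner : ∀ c d : W, H.nbhd c = H.nbhd d → c ≠ d → d ∉ Set.range f → False := by
    intro c d hcd hne hdout
    have hadj : ∀ z, H.Adj d z ↔ H.Adj c z := fun z => by
      have : z ∈ H.nbhd d ↔ z ∈ H.nbhd c := by rw [hcd]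
      exact this
    have hadj' : ∀ z, H.Adj z d ↔ H.Adj z c := fun z =>
      ⟨fun h => H.symm _ _ ((hadj z).mp (H.symm _ _ h)),
       fun h => H.symm _ _ ((hadj z).mpr (H.symm _ _ h))⟩
    set H' := H.delVertex d with hH'
    set f' : V → {x : W // x ≠ d} := fun a => ⟨f a, fun h => hdout ⟨a, h⟩⟩ with hf'
    have hsub : ∀ x y : {x : W // x ≠ d},
        (H'.nbhd x ⊆ H'.nbhd y ↔ H.nbhd x.1 ⊆ H.nbhd y.1) := by
      intro x y
      constructor
      · intro hs t htx
        by_cases htd : t = d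
        · subst htd
          have h1 : H.Adj x.1 c := (hadj' x.1).mp htx
          have h2 : H.Adj y.1 c := hs (show H'.Adj x ⟨c, hne⟩ from h1)
          exact (hadj' y.1).mpr h2
        · exact hs (show H'.Adj x ⟨t, htd⟩ from htx)
      · intro hs t htx
        exact hs htx
    have hspan : ∀ x y : {x : W // x ≠ d},
        (H'.SpanningPair x y ↔ H.SpanningPair x.1 y.1) := by
      intro x y
      constructor
      · rintro ⟨s1, s2⟩
        constructor
        · intro z hz
          by_cases hzd : z = d
          · subst hzd
            have h1 : ¬ H'.Adj y ⟨c, hne⟩ := fun h => hz ((hadj' y.1).mpr h)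
            rw [← hcd]
            exact (hsub _ x).mp (s1 ⟨c, hne⟩ h1)
          · exact (hsub _ x).mp (s1 ⟨z, hzd⟩ hz)
        · intro z hz
          by_cases hzd : z = d
          · subst hzd
            have h1 : ¬ H'.Adj x ⟨c, hne⟩ := fun h => hz ((hadj' x.1).mpr h)
            rw [← hcd]
            exact (hsub _ y).mp (s2 ⟨c, hne⟩ h1)
          · exact (hsub _ y).mp (s2 ⟨z, hzd⟩ hz)
      · rintro ⟨s1, s2⟩
        exact ⟨fun z hz => (hsub z x).mpr (s1 z.1 hz),
               fun z hz => (hsub z y).mpr (s2 z.1 hz)⟩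
    have hincl : ∀ x y : {x : W // x ≠ d},
        (H'.InclusionEdge x y ↔ H.InclusionEdge x.1 y.1) :=
      fun x y => and_congr Iff.rfl (or_congr (hsub x y) (hsub y x))
    have hovl : ∀ x y : {x : W // x ≠ d}, (H'.Overlaps x y ↔ H.Overlaps x.1 y.1) :=
      fun x y => and_congr Iff.rfl
        (and_congr (not_congr (hsub x y)) (not_congr (hsub y x)))
    have hcp' : ∀ x y : {x : W // x ≠ d},
        (H'.CircularPair x y ↔ H.CircularPair x.1 y.1) :=
      fun x y => and_congr (hspan x y) Iff.rfl
    have hcircH' : H'.CircularlyPaired := by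
      intro x
      obtain ⟨p, hp⟩ := hcirc x.1
      by_cases hpd : p = d
      · subst hpd
        refine ⟨⟨c, hne⟩, (hcp' _ _).mpr ?_⟩
        refine ⟨⟨fun z hz => hp.1.1 z fun h => hz ((hadj z).mp h), fun z hz => ?_⟩,
          fun h => hp.2 ((hadj' x.1).mpr h)⟩
        show H.nbhd z ⊆ H.nbhd c
        rw [hcd]
        exact hp.1.2 z hz
      · exact ⟨⟨p, hpd⟩, (hcp' _ _).mpr hp⟩
    have hemb' : G.InducedEmb H' f' :=
      ⟨fun a b h => hemb.1 (congrArg Subtype.val h), fun a b => hemb.2 a b⟩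
    have hsame' : G.SameEdgeTypes H' f' := by
      intro a b hab
      obtain ⟨h1, h2, h3⟩ := hsame a b hab
      have e1 : H'.InclusionEdge (f' a) (f' b) ↔ H.InclusionEdge (f a) (f b) :=
        hincl (f' a) (f' b)
      have e2 : H'.OneOverlapEdge (f' a) (f' b) ↔ H.OneOverlapEdge (f a) (f b) :=
        and_congr (hovl (f' a) (f' b)) (not_congr (hspan (f' a) (f' b)))
      have e3 : H'.TwoOverlapEdge (f' a) (f' b) ↔ H.TwoOverlapEdge (f a) (f b) :=
        and_congr (hovl (f' a) (f' b)) (hspan (f' a) (f' b))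
      exact ⟨h1.trans e1.symm, h2.trans e2.symm, h3.trans e3.symm⟩
    haveI := hfin
    haveI : Fintype W := Fintype.ofFinite W
    letI : DecidablePred (fun y : W => y ≠ d) := Classical.decPred _
    have hlt : Nat.card {x : W // x ≠ d} < Nat.card W := by
      simp only [Nat.card_eq_fintype_card]
      exact Fintype.card_subtype_lt (x := d) (by simp)
    have hge := hmin _ H' f' inferInstance hemb' hsame' hcircH'
    omega
  intro c d hcd
  by_contra hne
  have hout : c ∉ Set.range f ∨ d ∉ Set.range f := by
    by_contra h
    push_neg at h
    obtain ⟨⟨a, ha⟩, ⟨b, hb⟩⟩ := h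
    refine ht a b ⟨fun hab => hne (by rw [← ha, ← hb, hab]), Set.ext fun x => ?_⟩
    have e1 := hemb.2 a x
    have e2 := hemb.2 b x
    simp only [nbhd, Set.mem_setOf_eq]
    rw [e1, e2, ha, hb]
    have : f x ∈ H.nbhd c ↔ f x ∈ H.nbhd d := by rw [hcd]
    exact this
  rcases hout with h | h
  · exact inner d c hcd.symm (Ne.symm hne) h
  · exact inner c d hcd hne h
-- ### the surgery construction

open Classical in
noncomputable def sig (U Vv w w' : W) (z : W) : W :=
  if z = U then w' else if z = Vv then w else z

lemma sig_left (U Vv w w' : W) : sig U Vv w w' U = w' := by simp [sig]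

lemma sig_right (U Vv w w' : W) (h : U ≠ Vv) : sig U Vv w w' Vv = w := by
  simp [sig, Ne.symm h]

lemma sig_other (U Vv w w' : W) {z : W} (h1 : z ≠ U) (h2 : z ≠ Vv) :
    sig U Vv w w' z = z := by simp [sig, h1, h2]

noncomputable def surgery (H : LoopGraph W) (U Vv w w' : W) (hUV : U ≠ Vv) :
    LoopGraph {x : W // x ≠ w ∧ x ≠ w'} where
  Adj a b := H.Adj (sig U Vv w w' a.1) (sig U Vv w w' b.1) ∧
    ¬(a.1 = U ∧ b.1 = Vv) ∧ ¬(a.1 = Vv ∧ b.1 = U)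
  symm a b h := ⟨H.symm _ _ h.1, fun hc => h.2.2 ⟨hc.2, hc.1⟩, fun hc => h.2.1 ⟨hc.2, hc.1⟩⟩
  refl a := ⟨H.refl _, fun hc => hUV (hc.1.symm.trans hc.2), fun hc => hUV (hc.2.symm.trans hc.1)⟩

lemma surgery_aux (G : LoopGraph V) (H : LoopGraph W) (f : V → W)
    (hu : ∀ x, ¬ G.Universal x) (ht : ∀ a b, ¬ G.TrueTwins a b)
    {u v : V} (hcp : G.CircularPair u v)
    (hcomp : G.IsCircularCompletion H f)
    (htf : ∀ c d : W, H.nbhd c = H.nbhd d → c = d)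
    {w w' : W}
    (hw : H.CircularPair (f u) w) (hw' : H.CircularPair (f v) w')
    (hDw : ¬ H.nbhd w ⊆ H.nbhd (f v)) (hDw' : ¬ H.nbhd w' ⊆ H.nbhd (f u)) :
    False := by
  obtain ⟨hfin, hemb, hsame, hcirc, hmin⟩ := hcomp
  have hGnadj : ¬ G.Adj u v := hcp.2
  have huv : u ≠ v := fun h => hGnadj (h ▸ G.refl u)
  have hnuv : ¬ H.Adj (f u) (f v) := fun h => hGnadj ((hemb.2 u v).mpr h)
  have hnvu : ¬ H.Adj (f v) (f u) := fun h => hnuv (H.symm _ _ h)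
  have huvne : f u ≠ f v := fun h => hnuv (by rw [h]; exact H.refl (f v))
  have E1 : ∀ a : V, ¬ H.Adj (f v) (f a) → H.nbhd (f a) ⊆ H.nbhd (f u) :=
    lift_spanning_incl G H f ht hemb hsame hcp.1
  have E2 : ∀ a : V, ¬ H.Adj (f u) (f a) → H.nbhd (f a) ⊆ H.nbhd (f v) :=
    lift_spanning_incl G H f ht hemb hsame hcp.1.symm'
  have sw1 := hw.1.1
  have sv1 := hw'.1.1
  have hnUw : ¬ H.Adj (f u) w := hw.2
  have hnVw' : ¬ H.Adj (f v) w' := hw'.2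
  have hNVw : H.nbhd (f v) ⊆ H.nbhd w := hw.1.2 (f v) hnuv
  have hNUw' : H.nbhd (f u) ⊆ H.nbhd w' := hw'.1.2 (f u) hnvu
  have hwrange : w ∉ Set.range f := by
    rintro ⟨a, rfl⟩
    exact hDw (E2 a hnUw)
  have hw'range : w' ∉ Set.range f := by
    rintro ⟨a, rfl⟩
    exact hDw' (E1 a hnVw')
  have uniq : ∀ {x y y' : W}, H.CircularPair x y → H.CircularPair x y' → y = y' :=
    fun h h' => htf _ _ (partner_nbhd_eq h h')
  set K := H.surgery (f u) (f v) w w' huvne with hK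
  set fst : V → {x : W // x ≠ w ∧ x ≠ w'} :=
    fun a => ⟨f a, fun h => hwrange ⟨a, h⟩, fun h => hw'range ⟨a, h⟩⟩ with hfst
  have hval : ∀ c : V, c ≠ u → c ≠ v → (f c ≠ f u ∧ f c ≠ f v) :=
    fun c h1 h2 => ⟨fun h => h1 (hemb.1 h), fun h => h2 (hemb.1 h)⟩
  have hKcomm : ∀ a b, K.Adj a b ↔ K.Adj b a := fun a b => ⟨K.symm a b, K.symm b a⟩
  -- adjacency characterizations
  have CUU : ∀ a b : {x : W // x ≠ w ∧ x ≠ w'}, a.1 = f u → b.1 = f u → K.Adj a b := by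
    intro a b ha hb
    refine ⟨?_, fun hc => huvne (hb.symm.trans hc.2), fun hc => huvne (ha.symm.trans hc.1)⟩
    show H.Adj (sig (f u) (f v) w w' a.1) (sig (f u) (f v) w w' b.1)
    rw [ha, hb, sig_left]
    exact H.refl w'
  have CVV : ∀ a b : {x : W // x ≠ w ∧ x ≠ w'}, a.1 = f v → b.1 = f v → K.Adj a b := by
    intro a b ha hb
    refine ⟨?_, fun hc => huvne (hc.1.symm.trans ha), fun hc => huvne (hc.2.symm.trans hb)⟩
    show H.Adj (sig (f u) (f v) w w' a.1) (sig (f u) (f v) w w' b.1)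
    rw [ha, hb, sig_right _ _ _ _ huvne]
    exact H.refl w
  have CUV : ∀ a b : {x : W // x ≠ w ∧ x ≠ w'}, a.1 = f u → b.1 = f v → ¬ K.Adj a b :=
    fun a b ha hb h => h.2.1 ⟨ha, hb⟩
  have CVU : ∀ a b : {x : W // x ≠ w ∧ x ≠ w'}, a.1 = f v → b.1 = f u → ¬ K.Adj a b :=
    fun a b ha hb h => h.2.2 ⟨ha, hb⟩
  have hA_ug : ∀ a b : {x : W // x ≠ w ∧ x ≠ w'}, a.1 = f u → b.1 ≠ f u → b.1 ≠ f v →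
      (K.Adj a b ↔ H.Adj w' b.1) := by
    intro a b ha hb1 hb2
    constructor
    · rintro ⟨h, -, -⟩
      rwa [ha, sig_left, sig_other _ _ _ _ hb1 hb2] at h
    · intro h
      refine ⟨?_, fun hc => hb2 hc.2, fun hc => huvne (ha.symm.trans hc.1)⟩
      show H.Adj (sig (f u) (f v) w w' a.1) (sig (f u) (f v) w w' b.1)
      rw [ha, sig_left, sig_other _ _ _ _ hb1 hb2]
      exact h
  have hA_vg : ∀ a b : {x : W // x ≠ w ∧ x ≠ w'}, a.1 = f v → b.1 ≠ f u → b.1 ≠ f v →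
      (K.Adj a b ↔ H.Adj w b.1) := by
    intro a b ha hb1 hb2
    constructor
    · rintro ⟨h, -, -⟩
      rwa [ha, sig_right _ _ _ _ huvne, sig_other _ _ _ _ hb1 hb2] at h
    · intro h
      refine ⟨?_, fun hc => huvne (hc.1.symm.trans ha), fun hc => hb1 hc.2⟩
      show H.Adj (sig (f u) (f v) w w' a.1) (sig (f u) (f v) w w' b.1)
      rw [ha, sig_right _ _ _ _ huvne, sig_other _ _ _ _ hb1 hb2]
      exact h
  have hA_gg : ∀ a b : {x : W // x ≠ w ∧ x ≠ w'}, a.1 ≠ f u → a.1 ≠ f v → b.1 ≠ f u →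
      b.1 ≠ f v → (K.Adj a b ↔ H.Adj a.1 b.1) := by
    intro a b ha1 ha2 hb1 hb2
    constructor
    · rintro ⟨h, -, -⟩
      rwa [sig_other _ _ _ _ ha1 ha2, sig_other _ _ _ _ hb1 hb2] at h
    · intro h
      refine ⟨?_, fun hc => ha1 hc.1, fun hc => ha2 hc.1⟩
      show H.Adj (sig (f u) (f v) w w' a.1) (sig (f u) (f v) w w' b.1)
      rw [sig_other _ _ _ _ ha1 ha2, sig_other _ _ _ _ hb1 hb2]
      exact h
  -- neighbourhood-inclusion transfer lemmas
  have M2 : ∀ s t : {x : W // x ≠ w ∧ x ≠ w'}, s.1 ≠ f u → s.1 ≠ f v → t.1 ≠ f u →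
      t.1 ≠ f v → H.nbhd s.1 ⊆ H.nbhd t.1 → K.nbhd s ⊆ K.nbhd t := by
    intro s t hs1 hs2 ht1 ht2 hsub z hz
    show K.Adj t z
    have hz' : K.Adj s z := hz
    by_cases h1 : z.1 = f u
    · have h2 : H.Adj w' s.1 := ((hKcomm s z).trans (hA_ug z s h1 hs1 hs2)).mp hz'
      have h3 : H.Adj w' t.1 := H.symm _ _ (hsub (H.symm _ _ h2))
      exact ((hKcomm t z).trans (hA_ug z t h1 ht1 ht2)).mpr h3
    by_cases h2 : z.1 = f v
    · have h3 : H.Adj w s.1 := ((hKcomm s z).trans (hA_vg z s h2 hs1 hs2)).mp hz'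
      have h4 : H.Adj w t.1 := H.symm _ _ (hsub (H.symm _ _ h3))
      exact ((hKcomm t z).trans (hA_vg z t h2 ht1 ht2)).mpr h4
    · have h3 : H.Adj s.1 z.1 := (hA_gg s z hs1 hs2 h1 h2).mp hz'
      exact (hA_gg t z ht1 ht2 h1 h2).mpr (hsub h3)
  have M2u : ∀ s : {x : W // x ≠ w ∧ x ≠ w'}, s.1 ≠ f u → s.1 ≠ f v →
      H.nbhd s.1 ⊆ H.nbhd (f u) →
      ∀ tU : {x : W // x ≠ w ∧ x ≠ w'}, tU.1 = f u → K.nbhd s ⊆ K.nbhd tU := by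
    intro s hs1 hs2 hsub tU htU z hz
    show K.Adj tU z
    by_cases h1 : z.1 = f u
    · exact CUU tU z htU h1
    by_cases h2 : z.1 = f v
    · have h3 : H.Adj w s.1 := ((hKcomm s z).trans (hA_vg z s h2 hs1 hs2)).mp hz
      exact absurd (hsub (H.symm _ _ h3)) hnUw
    · have h3 : H.Adj s.1 z.1 := (hA_gg s z hs1 hs2 h1 h2).mp hz
      exact (hA_ug tU z htU h1 h2).mpr (hNUw' (hsub h3))
  have M2v : ∀ s : {x : W // x ≠ w ∧ x ≠ w'}, s.1 ≠ f u → s.1 ≠ f v →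
      H.nbhd s.1 ⊆ H.nbhd (f v) →
      ∀ tV : {x : W // x ≠ w ∧ x ≠ w'}, tV.1 = f v → K.nbhd s ⊆ K.nbhd tV := by
    intro s hs1 hs2 hsub tV htV z hz
    show K.Adj tV z
    by_cases h2 : z.1 = f v
    · exact CVV tV z htV h2
    by_cases h1 : z.1 = f u
    · have h3 : H.Adj w' s.1 := ((hKcomm s z).trans (hA_ug z s h1 hs1 hs2)).mp hz
      exact absurd (hsub (H.symm _ _ h3)) hnVw'
    · have h3 : H.Adj s.1 z.1 := (hA_gg s z hs1 hs2 h1 h2).mp hz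
      exact (hA_vg tV z htV h1 h2).mpr (hNVw (hsub h3))
  have M4u : ∀ t : {x : W // x ≠ w ∧ x ≠ w'}, t.1 ≠ f u → t.1 ≠ f v →
      H.nbhd w' ⊆ H.nbhd t.1 →
      ∀ sU : {x : W // x ≠ w ∧ x ≠ w'}, sU.1 = f u → K.nbhd sU ⊆ K.nbhd t := by
    intro t ht1 ht2 hsub sU hsU z hz
    show K.Adj t z
    by_cases h1 : z.1 = f u
    · exact ((hKcomm t z).trans (hA_ug z t h1 ht1 ht2)).mpr (H.symm _ _ (hsub (H.refl w')))
    by_cases h2 : z.1 = f v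
    · exact absurd hz (CUV sU z hsU h2)
    · have h3 : H.Adj w' z.1 := (hA_ug sU z hsU h1 h2).mp hz
      exact (hA_gg t z ht1 ht2 h1 h2).mpr (hsub h3)
  have M4v : ∀ t : {x : W // x ≠ w ∧ x ≠ w'}, t.1 ≠ f u → t.1 ≠ f v →
      H.nbhd w ⊆ H.nbhd t.1 →
      ∀ sV : {x : W // x ≠ w ∧ x ≠ w'}, sV.1 = f v → K.nbhd sV ⊆ K.nbhd t := by
    intro t ht1 ht2 hsub sV hsV z hz
    show K.Adj t z
    by_cases h2 : z.1 = f v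
    · exact ((hKcomm t z).trans (hA_vg z t h2 ht1 ht2)).mpr (H.symm _ _ (hsub (H.refl w)))
    by_cases h1 : z.1 = f u
    · exact absurd hz (CVU sV z hsV h1)
    · have h3 : H.Adj w z.1 := (hA_vg sV z hsV h1 h2).mp hz
      exact (hA_gg t z ht1 ht2 h1 h2).mpr (hsub h3)
  have M3u : ∀ t : {x : W // x ≠ w ∧ x ≠ w'}, t.1 ≠ f u → t.1 ≠ f v →
      (∀ x, ¬ H.Adj t.1 x → H.nbhd x ⊆ H.nbhd (f v)) →
      ∀ sU : {x : W // x ≠ w ∧ x ≠ w'}, sU.1 = f u → K.nbhd sU ⊆ K.nbhd t := by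
    intro t ht1 ht2 hsp sU hsU z hz
    show K.Adj t z
    by_cases h1 : z.1 = f u
    · refine ((hKcomm t z).trans (hA_ug z t h1 ht1 ht2)).mpr ?_
      by_contra hno
      have h4 : ¬ H.Adj t.1 w' := fun h => hno (H.symm _ _ h)
      exact hnVw' (hsp w' h4 (H.refl w'))
    by_cases h2 : z.1 = f v
    · exact absurd hz (CUV sU z hsU h2)
    · have h3 : H.Adj w' z.1 := (hA_ug sU z hsU h1 h2).mp hz
      refine (hA_gg t z ht1 ht2 h1 h2).mpr ?_
      by_contra hno
      exact hnVw' (hsp z.1 hno (H.symm _ _ h3))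
  have M3v : ∀ t : {x : W // x ≠ w ∧ x ≠ w'}, t.1 ≠ f u → t.1 ≠ f v →
      (∀ x, ¬ H.Adj t.1 x → H.nbhd x ⊆ H.nbhd (f u)) →
      ∀ sV : {x : W // x ≠ w ∧ x ≠ w'}, sV.1 = f v → K.nbhd sV ⊆ K.nbhd t := by
    intro t ht1 ht2 hsp sV hsV z hz
    show K.Adj t z
    by_cases h2 : z.1 = f v
    · refine ((hKcomm t z).trans (hA_vg z t h2 ht1 ht2)).mpr ?_
      by_contra hno
      have h4 : ¬ H.Adj t.1 w := fun h => hno (H.symm _ _ h)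
      exact hnUw (hsp w h4 (H.refl w))
    by_cases h1 : z.1 = f u
    · exact absurd hz (CVU sV z hsV h1)
    · have h3 : H.Adj w z.1 := (hA_vg sV z hsV h1 h2).mp hz
      refine (hA_gg t z ht1 ht2 h1 h2).mpr ?_
      by_contra hno
      exact hnUw (hsp z.1 hno (H.symm _ _ h3))
  -- spanning-pair transfer lemmas
  have SPcore : ∀ a b : {x : W // x ≠ w ∧ x ≠ w'}, a.1 ≠ f u → a.1 ≠ f v → b.1 ≠ f u →
      b.1 ≠ f v → (∀ x, ¬ H.Adj b.1 x → H.nbhd x ⊆ H.nbhd a.1) →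
      ∀ z : {x : W // x ≠ w ∧ x ≠ w'}, ¬ K.Adj b z → K.nbhd z ⊆ K.nbhd a := by
    intro a b ha1 ha2 hb1 hb2 hsp z hz
    by_cases h1 : z.1 = f u
    · have h2 : ¬ H.Adj b.1 w' := fun h =>
        hz (((hKcomm b z).trans (hA_ug z b h1 hb1 hb2)).mpr (H.symm _ _ h))
      exact M4u a ha1 ha2 (hsp w' h2) z h1
    by_cases h2 : z.1 = f v
    · have h3 : ¬ H.Adj b.1 w := fun h =>
        hz (((hKcomm b z).trans (hA_vg z b h2 hb1 hb2)).mpr (H.symm _ _ h))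
      exact M4v a ha1 ha2 (hsp w h3) z h2
    · have h3 : ¬ H.Adj b.1 z.1 := fun h => hz ((hA_gg b z hb1 hb2 h1 h2).mpr h)
      exact M2 z a h1 h2 ha1 ha2 (hsp z.1 h3)
  have SPgen : ∀ a b : {x : W // x ≠ w ∧ x ≠ w'}, a.1 ≠ f u → a.1 ≠ f v → b.1 ≠ f u →
      b.1 ≠ f v → H.SpanningPair a.1 b.1 → K.SpanningPair a b :=
    fun a b ha1 ha2 hb1 hb2 hsp =>
      ⟨SPcore a b ha1 ha2 hb1 hb2 hsp.1, SPcore b a hb1 hb2 ha1 ha2 hsp.2⟩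
  have SPu : ∀ b : {x : W // x ≠ w ∧ x ≠ w'}, b.1 ≠ f u → b.1 ≠ f v →
      H.SpanningPair (f u) b.1 →
      ∀ aU : {x : W // x ≠ w ∧ x ≠ w'}, aU.1 = f u → K.SpanningPair aU b := by
    intro b hb1 hb2 hsp aU haU
    constructor
    · intro z hz
      by_cases h1 : z.1 = f u
      · exact (congrArg K.nbhd (Subtype.ext (h1.trans haU.symm))).subset
      by_cases h2 : z.1 = f v
      · have h3 : ¬ H.Adj b.1 w := fun h =>
          hz (((hKcomm b z).trans (hA_vg z b h2 hb1 hb2)).mpr (H.symm _ _ h))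
        exact absurd (hsp.1 w h3 (H.refl w)) hnUw
      · have h3 : ¬ H.Adj b.1 z.1 := fun h => hz ((hA_gg b z hb1 hb2 h1 h2).mpr h)
        exact M2u z h1 h2 (hsp.1 z.1 h3) aU haU
    · intro z hz
      by_cases h1 : z.1 = f u
      · exact absurd (CUU aU z haU h1) hz
      by_cases h2 : z.1 = f v
      · exact M3v b hb1 hb2 hsp.1 z h2
      · have h3 : ¬ H.Adj w' z.1 := fun h => hz ((hA_ug aU z haU h1 h2).mpr h)
        have h4 : ¬ H.Adj (f u) z.1 := fun h => h3 (hNUw' h)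
        exact M2 z b h1 h2 hb1 hb2 (hsp.2 z.1 h4)
  have SPv : ∀ b : {x : W // x ≠ w ∧ x ≠ w'}, b.1 ≠ f u → b.1 ≠ f v →
      H.SpanningPair (f v) b.1 →
      ∀ aV : {x : W // x ≠ w ∧ x ≠ w'}, aV.1 = f v → K.SpanningPair aV b := by
    intro b hb1 hb2 hsp aV haV
    constructor
    · intro z hz
      by_cases h2 : z.1 = f v
      · exact (congrArg K.nbhd (Subtype.ext (h2.trans haV.symm))).subset
      by_cases h1 : z.1 = f u
      · have h3 : ¬ H.Adj b.1 w' := fun h =>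
          hz (((hKcomm b z).trans (hA_ug z b h1 hb1 hb2)).mpr (H.symm _ _ h))
        exact absurd (hsp.1 w' h3 (H.refl w')) hnVw'
      · have h3 : ¬ H.Adj b.1 z.1 := fun h => hz ((hA_gg b z hb1 hb2 h1 h2).mpr h)
        exact M2v z h1 h2 (hsp.1 z.1 h3) aV haV
    · intro z hz
      by_cases h2 : z.1 = f v
      · exact absurd (CVV aV z haV h2) hz
      by_cases h1 : z.1 = f u
      · exact M3u b hb1 hb2 hsp.1 z h1
      · have h3 : ¬ H.Adj w z.1 := fun h => hz ((hA_vg aV z haV h1 h2).mpr h)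
        have h4 : ¬ H.Adj (f v) z.1 := fun h => h3 (hNVw h)
        exact M2 z b h1 h2 hb1 hb2 (hsp.2 z.1 h4)
  have SPuv : ∀ aU bV : {x : W // x ≠ w ∧ x ≠ w'}, aU.1 = f u → bV.1 = f v →
      K.SpanningPair aU bV := by
    intro aU bV haU hbV
    constructor
    · intro z hz
      by_cases h1 : z.1 = f u
      · exact (congrArg K.nbhd (Subtype.ext (h1.trans haU.symm))).subset
      by_cases h2 : z.1 = f v
      · exact absurd (CVV bV z hbV h2) hz
      · have h3 : ¬ H.Adj w z.1 := fun h => hz ((hA_vg bV z hbV h1 h2).mpr h)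
        exact M2u z h1 h2 (sw1 z.1 h3) aU haU
    · intro z hz
      by_cases h2 : z.1 = f v
      · exact (congrArg K.nbhd (Subtype.ext (h2.trans hbV.symm))).subset
      by_cases h1 : z.1 = f u
      · exact absurd (CUU aU z haU h1) hz
      · have h3 : ¬ H.Adj w' z.1 := fun h => hz ((hA_ug aU z haU h1 h2).mpr h)
        exact M2v z h1 h2 (sv1 z.1 h3) bV hbV
  -- the induced embedding into K
  have hKemb : ∀ a b : V, G.Adj a b ↔ K.Adj (fst a) (fst b) := by
    intro a b
    by_cases ha : a = u
    · by_cases hb : b = u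
      · rw [ha, hb]; exact iff_of_true (G.refl u) (CUU _ _ rfl rfl)
      by_cases hb' : b = v
      · rw [ha, hb']; exact iff_of_false hGnadj (CUV _ _ rfl rfl)
      · obtain ⟨hb1, hb2⟩ := hval b hb hb'
        rw [ha, hA_ug (fst u) (fst b) rfl hb1 hb2]
        constructor
        · intro h; exact hNUw' ((hemb.2 u b).mp h)
        · intro h
          by_contra hG
          have h1 : ¬ H.Adj (f u) (f b) := fun hh => hG ((hemb.2 u b).mpr hh)
          exact hnVw' (E2 b h1 (H.symm _ _ h))
    by_cases ha' : a = v
    · by_cases hb : b = u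
      · rw [ha', hb]; exact iff_of_false (fun h => hGnadj (G.symm _ _ h)) (CVU _ _ rfl rfl)
      by_cases hb' : b = v
      · rw [ha', hb']; exact iff_of_true (G.refl v) (CVV _ _ rfl rfl)
      · obtain ⟨hb1, hb2⟩ := hval b hb hb'
        rw [ha', hA_vg (fst v) (fst b) rfl hb1 hb2]
        constructor
        · intro h; exact hNVw ((hemb.2 v b).mp h)
        · intro h
          by_contra hG
          have h1 : ¬ H.Adj (f v) (f b) := fun hh => hG ((hemb.2 v b).mpr hh)
          exact hnUw (E1 b h1 (H.symm _ _ h))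
    · obtain ⟨ha1, ha2⟩ := hval a ha ha'
      by_cases hb : b = u
      · rw [hb, hKcomm (fst a) (fst u), hA_ug (fst u) (fst a) rfl ha1 ha2]
        constructor
        · intro h; exact hNUw' ((hemb.2 u a).mp (G.symm _ _ h))
        · intro h
          by_contra hG
          have h1 : ¬ H.Adj (f u) (f a) := fun hh => hG (G.symm _ _ ((hemb.2 u a).mpr hh))
          exact hnVw' (E2 a h1 (H.symm _ _ h))
      by_cases hb' : b = v
      · rw [hb', hKcomm (fst a) (fst v), hA_vg (fst v) (fst a) rfl ha1 ha2]
        constructor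
        · intro h; exact hNVw ((hemb.2 v a).mp (G.symm _ _ h))
        · intro h
          by_contra hG
          have h1 : ¬ H.Adj (f v) (f a) := fun hh => hG (G.symm _ _ ((hemb.2 v a).mpr hh))
          exact hnUw (E1 a h1 (H.symm _ _ h))
      · obtain ⟨hb1, hb2⟩ := hval b hb hb'
        rw [hA_gg (fst a) (fst b) ha1 ha2 hb1 hb2]
        exact hemb.2 a b
  have R1 : ∀ a b : V, K.nbhd (fst a) ⊆ K.nbhd (fst b) → G.nbhd a ⊆ G.nbhd b := by
    intro a b hs t ht
    exact (hKemb b t).mpr (hs (show (fst t) ∈ K.nbhd (fst a) from (hKemb a t).mp ht))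
  have R2 : ∀ a b : V, K.SpanningPair (fst a) (fst b) → G.SpanningPair a b :=
    fun a b hsp => ⟨fun x hx => R1 x a (hsp.1 (fst x) fun h => hx ((hKemb b x).mpr h)),
                    fun y hy => R1 y b (hsp.2 (fst y) fun h => hy ((hKemb a y).mpr h))⟩
  -- K is circularly paired
  have hcircK : K.CircularlyPaired := by
    intro x
    by_cases h1 : x.1 = f u
    · exact ⟨fst v, SPuv x (fst v) h1 rfl, CUV x (fst v) h1 rfl⟩
    by_cases h2 : x.1 = f v
    · exact ⟨fst u, (SPuv (fst u) x rfl h2).symm', CVU x (fst u) h2 rfl⟩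
    · obtain ⟨p, hp⟩ := hcirc x.1
      have hpw : p ≠ w := by
        intro h; subst h
        exact h1 (uniq hp.symm' hw.symm')
      have hpw' : p ≠ w' := by
        intro h; subst h
        exact h2 (uniq hp.symm' hw'.symm')
      have hpu : p ≠ f u := fun h => x.2.1 (uniq (h ▸ hp).symm' hw)
      have hpv : p ≠ f v := fun h => x.2.2 (uniq (h ▸ hp).symm' hw')
      exact ⟨⟨p, hpw, hpw'⟩, SPgen x ⟨p, hpw, hpw'⟩ h1 h2 hpu hpv hp.1,
        fun h => hp.2 ((hA_gg x _ h1 h2 hpu hpv).mp h)⟩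
  -- edge types are preserved
  have hback : ∀ c d : V, H.nbhd (f c) ⊆ H.nbhd (f d) → G.nbhd c ⊆ G.nbhd d :=
    fun c d h t ht' => (hemb.2 d t).mpr (h ((hemb.2 c t).mp ht'))
  have star_u : ∀ c : V, c ≠ u → c ≠ v → G.Adj u c → G.nbhd u ⊆ G.nbhd c →
      K.nbhd (fst u) ⊆ K.nbhd (fst c) := by
    intro c hcu hcv hGuc hsubG
    obtain ⟨hc1, hc2⟩ := hval c hcu hcv
    have hGvc : G.Adj v c := by
      by_contra hno
      have h1 : ¬ H.Adj (f v) (f c) := fun h => hno ((hemb.2 v c).mpr h)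
      exact ht u c ⟨Ne.symm hcu, Set.Subset.antisymm hsubG (hback c u (E1 c h1))⟩
    have hnsub1 : ¬ G.nbhd v ⊆ G.nbhd c := by
      intro hsub
      refine hu c fun x => ?_
      by_contra hbx
      have h1 : ¬ G.Adj u x := fun h => hbx (hsubG h)
      exact hbx (hsub (hcp.1.2 x h1 (G.refl x)))
    have hnsub2 : ¬ G.nbhd c ⊆ G.nbhd v := by
      intro hsub
      exact hGnadj (G.symm _ _ (hsub (hsubG (G.refl u))))
    have hspvc : G.SpanningPair v c :=
      ⟨fun x hx => hcp.1.2 x (fun h => hx (hsubG h)),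
       fun y hy => (hcp.1.1 y hy).trans hsubG⟩
    have h2H : H.TwoOverlapEdge (f v) (f c) :=
      (hsame v c hGvc).2.2.mp ⟨⟨hGvc, hnsub1, hnsub2⟩, hspvc⟩
    exact M3u (fst c) hc1 hc2 h2H.2.1 (fst u) rfl
  have star_v : ∀ c : V, c ≠ u → c ≠ v → G.Adj v c → G.nbhd v ⊆ G.nbhd c →
      K.nbhd (fst v) ⊆ K.nbhd (fst c) := by
    intro c hcu hcv hGvc hsubG
    obtain ⟨hc1, hc2⟩ := hval c hcu hcv
    have hGuc : G.Adj u c := by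
      by_contra hno
      have h1 : ¬ H.Adj (f u) (f c) := fun h => hno ((hemb.2 u c).mpr h)
      exact ht v c ⟨Ne.symm hcv, Set.Subset.antisymm hsubG (hback c v (E2 c h1))⟩
    have hnsub1 : ¬ G.nbhd u ⊆ G.nbhd c := by
      intro hsub
      refine hu c fun x => ?_
      by_contra hbx
      have h1 : ¬ G.Adj v x := fun h => hbx (hsubG h)
      exact hbx (hsub (hcp.1.1 x h1 (G.refl x)))
    have hnsub2 : ¬ G.nbhd c ⊆ G.nbhd u := by
      intro hsub
      exact hGnadj (hsub (hsubG (G.refl v)))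
    have hspuc : G.SpanningPair u c :=
      ⟨fun x hx => hcp.1.1 x (fun h => hx (hsubG h)),
       fun y hy => (hcp.1.2 y hy).trans hsubG⟩
    have h2H : H.TwoOverlapEdge (f u) (f c) :=
      (hsame u c hGuc).2.2.mp ⟨⟨hGuc, hnsub1, hnsub2⟩, hspuc⟩
    exact M3v (fst c) hc1 hc2 h2H.2.1 (fst v) rfl
  have hsameK : G.SameEdgeTypes K fst := by
    intro a b hab
    have hKab : K.Adj (fst a) (fst b) := (hKemb a b).mp hab
    by_cases heq : a = b
    · rw [heq]
      exact ⟨iff_of_true ⟨G.refl b, Or.inl (Set.Subset.refl _)⟩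
          ⟨K.refl _, Or.inl (Set.Subset.refl _)⟩,
        iff_of_false (fun h => h.1.2.1 (Set.Subset.refl _))
          (fun h => h.1.2.1 (Set.Subset.refl _)),
        iff_of_false (fun h => h.1.2.1 (Set.Subset.refl _))
          (fun h => h.1.2.1 (Set.Subset.refl _))⟩
    have hcompKG : (K.nbhd (fst a) ⊆ K.nbhd (fst b) ∨ K.nbhd (fst b) ⊆ K.nbhd (fst a)) →
        (G.nbhd a ⊆ G.nbhd b ∨ G.nbhd b ⊆ G.nbhd a) :=
      fun h => h.elim (fun h' => Or.inl (R1 a b h')) (fun h' => Or.inr (R1 b a h'))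
    have hcompGK : (G.nbhd a ⊆ G.nbhd b ∨ G.nbhd b ⊆ G.nbhd a) →
        (K.nbhd (fst a) ⊆ K.nbhd (fst b) ∨ K.nbhd (fst b) ⊆ K.nbhd (fst a)) := by
      intro hc
      have hinclH : H.InclusionEdge (f a) (f b) := (hsame a b hab).1.mp ⟨hab, hc⟩
      by_cases hau : a = u
      · rw [hau] at hc hinclH hab ⊢
        have hbu : b ≠ u := fun h => heq (hau.trans h.symm)
        have hbv : b ≠ v := fun h => hGnadj (h ▸ hab)
        obtain ⟨hb1, hb2⟩ := hval b hbu hbv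
        rcases hinclH.2 with hH | hH
        · rcases hc with hG | hG
          · exact Or.inl (star_u b hbu hbv hab hG)
          · exact absurd ⟨fun h => hbu h.symm, Set.Subset.antisymm (hback u b hH) hG⟩ (ht u b)
        · exact Or.inr (M2u (fst b) hb1 hb2 hH (fst u) rfl)
      by_cases hav : a = v
      · rw [hav] at hc hinclH hab ⊢
        have hbu : b ≠ u := fun h => hGnadj (G.symm _ _ (h ▸ hab))
        have hbv : b ≠ v := fun h => heq (hav.trans h.symm)
        obtain ⟨hb1, hb2⟩ := hval b hbu hbv
        rcases hinclH.2 with hH | hH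
        · rcases hc with hG | hG
          · exact Or.inl (star_v b hbu hbv hab hG)
          · exact absurd ⟨fun h => hbv h.symm, Set.Subset.antisymm (hback v b hH) hG⟩ (ht v b)
        · exact Or.inr (M2v (fst b) hb1 hb2 hH (fst v) rfl)
      · obtain ⟨ha1, ha2⟩ := hval a hau hav
        by_cases hbu : b = u
        · rw [hbu] at hc hinclH hab ⊢
          rcases hinclH.2 with hH | hH
          · exact Or.inl (M2u (fst a) ha1 ha2 hH (fst u) rfl)
          · rcases hc with hG | hG
            · exact absurd ⟨fun h => hau h.symm, Set.Subset.antisymm (hback u a hH) hG⟩ (ht u a)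
            · exact Or.inr (star_u a hau hav (G.symm _ _ hab) hG)
        by_cases hbv : b = v
        · rw [hbv] at hc hinclH hab ⊢
          rcases hinclH.2 with hH | hH
          · exact Or.inl (M2v (fst a) ha1 ha2 hH (fst v) rfl)
          · rcases hc with hG | hG
            · exact absurd ⟨fun h => hav h.symm, Set.Subset.antisymm (hback v a hH) hG⟩ (ht v a)
            · exact Or.inr (star_v a hau hav (G.symm _ _ hab) hG)
        · obtain ⟨hb1, hb2⟩ := hval b hbu hbv
          rcases hinclH.2 with hH | hH
          · exact Or.inl (M2 (fst a) (fst b) ha1 ha2 hb1 hb2 hH)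
          · exact Or.inr (M2 (fst b) (fst a) hb1 hb2 ha1 ha2 hH)
    have h2GK : G.TwoOverlapEdge a b → K.SpanningPair (fst a) (fst b) := by
      intro h2
      have hspH : H.SpanningPair (f a) (f b) := ((hsame a b hab).2.2.mp h2).2
      by_cases hau : a = u
      · rw [hau] at hspH hab ⊢
        have hbu : b ≠ u := fun h => heq (hau.trans h.symm)
        have hbv : b ≠ v := fun h => hGnadj (h ▸ hab)
        obtain ⟨hb1, hb2⟩ := hval b hbu hbv
        exact SPu (fst b) hb1 hb2 hspH (fst u) rfl
      by_cases hav : a = v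
      · rw [hav] at hspH hab ⊢
        have hbu : b ≠ u := fun h => hGnadj (G.symm _ _ (h ▸ hab))
        have hbv : b ≠ v := fun h => heq (hav.trans h.symm)
        obtain ⟨hb1, hb2⟩ := hval b hbu hbv
        exact SPv (fst b) hb1 hb2 hspH (fst v) rfl
      · obtain ⟨ha1, ha2⟩ := hval a hau hav
        by_cases hbu : b = u
        · rw [hbu] at hspH ⊢
          exact (SPu (fst a) ha1 ha2 hspH.symm' (fst u) rfl).symm'
        by_cases hbv : b = v
        · rw [hbv] at hspH ⊢
          exact (SPv (fst a) ha1 ha2 hspH.symm' (fst v) rfl).symm'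
        · obtain ⟨hb1, hb2⟩ := hval b hbu hbv
          exact SPgen (fst a) (fst b) ha1 ha2 hb1 hb2 hspH
    have hovlK : G.Overlaps a b ↔ K.Overlaps (fst a) (fst b) := by
      constructor
      · rintro ⟨-, hn1, hn2⟩
        exact ⟨hKab, fun h => hn1 (R1 a b h), fun h => hn2 (R1 b a h)⟩
      · rintro ⟨-, hn1, hn2⟩
        refine ⟨hab, fun h => ?_, fun h => ?_⟩
        · rcases hcompGK (Or.inl h) with h' | h'
          · exact hn1 h'
          · exact ht a b ⟨heq, Set.Subset.antisymm h (R1 b a h')⟩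
        · rcases hcompGK (Or.inr h) with h' | h'
          · exact ht a b ⟨heq, Set.Subset.antisymm (R1 a b h') h⟩
          · exact hn2 h'
    refine ⟨⟨fun h => ⟨hKab, hcompGK h.2⟩, fun h => ⟨hab, hcompKG h.2⟩⟩, ?_, ?_⟩
    · exact ⟨fun h => ⟨hovlK.mp h.1, fun hs => h.2 (R2 a b hs)⟩,
        fun h => ⟨hovlK.mpr h.1, fun hs => h.2 (h2GK ⟨hovlK.mpr h.1, hs⟩)⟩⟩
    · exact ⟨fun h => ⟨hovlK.mp h.1, h2GK h⟩, fun h => ⟨hovlK.mpr h.1, R2 a b h.2⟩⟩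
  -- conclude by minimality
  have hembK : G.InducedEmb K fst :=
    ⟨fun a b h => hemb.1 (congrArg Subtype.val h), hKemb⟩
  haveI := hfin
  haveI : Fintype W := Fintype.ofFinite W
  letI : DecidablePred (fun y : W => y ≠ w ∧ y ≠ w') := Classical.decPred _
  have hlt : Nat.card {x : W // x ≠ w ∧ x ≠ w'} < Nat.card W := by
    simp only [Nat.card_eq_fintype_card]
    exact Fintype.card_subtype_lt (x := w) (by simp)
  have hge := hmin _ K fst inferInstance hembK hsameK hcircK
  omega

end LoopGraph

/-- A circular pair of `G` remains a circular pair in any circular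
completion of `G`. -/
theorem circularPair_in_completion
    {V W : Type} [Fintype V] (G : LoopGraph V)
    (hu : ∀ u, ¬ G.Universal u) (ht : ∀ a b, ¬ G.TrueTwins a b)
    (u v : V) (hcp : G.CircularPair u v)
    (H : LoopGraph W) (f : V → W) (hcomp : G.IsCircularCompletion H f) :
    H.CircularPair (f u) (f v) := by
  have htf := LoopGraph.no_twins_aux G H f ht hcomp
  have hnuv : ¬ H.Adj (f u) (f v) := fun h => hcp.2 ((hcomp.2.1.2 u v).mpr h)
  obtain ⟨w, hw⟩ := hcomp.2.2.2.1 (f u)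
  obtain ⟨w', hw'⟩ := hcomp.2.2.2.1 (f v)
  by_cases hDw : H.nbhd w ⊆ H.nbhd (f v)
  · exact LoopGraph.cp_of_nbhd_subset H hw hnuv hDw
  by_cases hDw' : H.nbhd w' ⊆ H.nbhd (f u)
  · exact (LoopGraph.cp_of_nbhd_subset H hw' (fun h => hnuv (H.symm _ _ h)) hDw').symm'
  · exact (LoopGraph.surgery_aux G H f hu ht hcp hcomp htf hw hw' hDw hDw').elim
end

section
/- Let G be a finite graph (with a loop at every vertex) having no universal vertices and no true twins. Then any two circular completions of G are isomorphic via a graph isomorphism that is the identity on the vertices of G. -/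
namespace CCU
open LoopGraph

variable {V W : Type}

lemma mem_nbhd {G : LoopGraph V} {u v : V} : v ∈ G.nbhd u ↔ G.Adj u v := Iff.rfl

lemma self_mem (G : LoopGraph V) (u : V) : u ∈ G.nbhd u := G.refl u

lemma adj_of_le {G : LoopGraph V} {u v : V} (h : G.nbhd u ⊆ G.nbhd v) : G.Adj v u :=
  h (G.refl u)

lemma span_symm {G : LoopGraph V} {u v : V} (h : G.SpanningPair u v) : G.SpanningPair v u :=
  ⟨h.2, h.1⟩

lemma cp_symm {G : LoopGraph V} {u v : V} (h : G.CircularPair u v) : G.CircularPair v u :=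
  ⟨span_symm h.1, fun ha => h.2 (G.symm _ _ ha)⟩

lemma ovl_symm {G : LoopGraph V} {u v : V} (h : G.Overlaps u v) : G.Overlaps v u :=
  ⟨G.symm _ _ h.1, h.2.2, h.2.1⟩

lemma two_symm {G : LoopGraph V} {u v : V} (h : G.TwoOverlapEdge u v) : G.TwoOverlapEdge v u :=
  ⟨ovl_symm h.1, span_symm h.2⟩

/-- any spanning pair covers the vertex set with its two closed neighbourhoods -/
lemma span_union {G : LoopGraph V} {u v : V} (h : G.SpanningPair u v) (x : V) :
    G.Adj u x ∨ G.Adj v x := by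
  by_cases hv : G.Adj v x
  · exact Or.inr hv
  · exact Or.inl (h.1 x hv (G.refl x))

/-- The key amplification lemma. -/
lemma star {G : LoopGraph V} (hu : ∀ u, ¬ G.Universal u) {a b p q : V}
    (hsp : G.SpanningPair a b) (hbp : G.nbhd b ⊆ G.nbhd p) (haq : G.nbhd a ⊆ G.nbhd q)
    (hP : ¬ ∃ u, G.CircularPair p u) : G.TwoOverlapEdge p q := by
  have hspan : G.SpanningPair p q := by
    constructor
    · intro x hqx
      have hax : ¬ G.Adj a x := fun h => hqx (haq h)
      exact (hsp.2 x hax).trans hbp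
    · intro y hpy
      have hby : ¬ G.Adj b y := fun h => hpy (hbp h)
      exact (hsp.1 y hby).trans haq
  have hadj : G.Adj p q := by
    by_contra hnadj
    exact hP ⟨q, hspan, hnadj⟩
  refine ⟨⟨hadj, ?_, ?_⟩, hspan⟩
  · intro hle
    apply hu q
    intro x
    rcases span_union hsp x with hx | hx
    · exact haq hx
    · exact hle (hbp hx)
  · intro hle
    apply hu p
    intro x
    rcases span_union hsp x with hx | hx
    · exact hle (haq hx)
    · exact hbp hx

/-- The set of vertices with no circular partner, as a type. -/
def UnpairedT (G : LoopGraph V) : Type := {v : V // ¬ ∃ u, G.CircularPair v u}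

instance (G : LoopGraph V) [Finite V] : Finite (UnpairedT G) :=
  Subtype.finite

/-- The canonical circular completion of `G`. -/
def ext (G : LoopGraph V) : LoopGraph (V ⊕ UnpairedT G) where
  Adj x y :=
    match x, y with
    | .inl a, .inl b => G.Adj a b
    | .inl a, .inr s => ¬ G.nbhd a ⊆ G.nbhd s.1
    | .inr s, .inl a => ¬ G.nbhd a ⊆ G.nbhd s.1
    | .inr s, .inr t => ¬ G.TwoOverlapEdge s.1 t.1
  symm := by
    rintro (a | s) (b | t) h
    · exact G.symm _ _ h
    · exact h
    · exact h
    · exact fun h2 => h (two_symm h2)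
  refl := by
    rintro (a | s)
    · exact G.refl a
    · rintro ⟨⟨_, hns, _⟩, _⟩
      exact hns (le_refl _)

@[simp] lemma ext_adj_inl_inl {G : LoopGraph V} {a b : V} :
    (ext G).Adj (.inl a) (.inl b) ↔ G.Adj a b := Iff.rfl

@[simp] lemma ext_adj_inl_inr {G : LoopGraph V} {a : V} {s : UnpairedT G} :
    (ext G).Adj (.inl a) (.inr s) ↔ ¬ G.nbhd a ⊆ G.nbhd s.1 := Iff.rfl

@[simp] lemma ext_adj_inr_inl {G : LoopGraph V} {a : V} {s : UnpairedT G} :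
    (ext G).Adj (.inr s) (.inl a) ↔ ¬ G.nbhd a ⊆ G.nbhd s.1 := Iff.rfl

@[simp] lemma ext_adj_inr_inr {G : LoopGraph V} {s t : UnpairedT G} :
    (ext G).Adj (.inr s) (.inr t) ↔ ¬ G.TwoOverlapEdge s.1 t.1 := Iff.rfl

end CCU
namespace CCU
open LoopGraph

variable {V : Type}

lemma ext_le_iff (G : LoopGraph V) {a b : V} :
    (ext G).nbhd (.inl a) ⊆ (ext G).nbhd (.inl b) ↔ G.nbhd a ⊆ G.nbhd b := by
  constructor
  · intro h x hx
    exact h (show Sum.inl x ∈ (ext G).nbhd (.inl a) from hx)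
  · rintro h (w | s) hx
    · exact h hx
    · exact fun h2 => hx (h.trans h2)

/-- the first spanning-pair component transfers from `G` to `ext G`. -/
lemma ext_span_half (G : LoopGraph V) (hu : ∀ u, ¬ G.Universal u) {a b : V}
    (hsp : G.SpanningPair a b) :
    ∀ x, ¬ (ext G).Adj (.inl b) x → (ext G).nbhd x ⊆ (ext G).nbhd (.inl a) := by
  rintro (w | v) hx
  · exact (ext_le_iff G).2 (hsp.1 w hx)
  · -- `hx : N[b] ⊆ N[v]`
    have hbv : G.nbhd b ⊆ G.nbhd v.1 := not_not.mp hx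
    rintro (z | u) hz
    · -- `hz : ¬ N[z] ⊆ N[v]`; goal `G.Adj a z`
      by_contra haz
      exact hz ((hsp.2 z haz).trans hbv)
    · -- `hz : ¬ TwoOvl v u`; goal `¬ N[a] ⊆ N[u]`
      intro hau
      exact hz (star hu hsp hbv hau v.2)

lemma ext_span_iff (G : LoopGraph V) (hu : ∀ u, ¬ G.Universal u) {a b : V} :
    (ext G).SpanningPair (.inl a) (.inl b) ↔ G.SpanningPair a b := by
  constructor
  · intro h
    constructor
    · intro x hx
      exact (ext_le_iff G).1 (h.1 (.inl x) hx)
    · intro y hy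
      exact (ext_le_iff G).1 (h.2 (.inl y) hy)
  · intro h
    exact ⟨ext_span_half G hu h, ext_span_half G hu (span_symm h)⟩

lemma ext_sameEdgeTypes (G : LoopGraph V) (hu : ∀ u, ¬ G.Universal u) :
    G.SameEdgeTypes (ext G) Sum.inl := by
  intro u v huv
  have hle := @ext_le_iff V G u v
  have hle' := @ext_le_iff V G v u
  have hovl : G.Overlaps u v ↔ (ext G).Overlaps (.inl u) (.inl v) := by
    unfold LoopGraph.Overlaps
    rw [ext_adj_inl_inl, hle, hle']
  have hsp := ext_span_iff G hu (a := u) (b := v)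
  refine ⟨?_, ?_, ?_⟩
  · unfold LoopGraph.InclusionEdge
    rw [ext_adj_inl_inl, hle, hle']
  · unfold LoopGraph.OneOverlapEdge
    rw [hovl, hsp]
  · unfold LoopGraph.TwoOverlapEdge
    rw [hovl, hsp]

lemma ext_pair (G : LoopGraph V) (hu : ∀ u, ¬ G.Universal u) (v : UnpairedT G) :
    (ext G).CircularPair (.inl v.1) (.inr v) := by
  constructor
  · constructor
    · -- comp1 : ∀ x, ¬ Adj (inr v) x → N[x] ⊆ N[inl v]
      rintro (w | w) hx
      · exact (ext_le_iff G).2 (not_not.mp hx)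
      · -- hx : ¬¬ TwoOvl v w, i.e. TwoOvl v w
        have htw : G.TwoOverlapEdge v.1 w.1 := not_not.mp hx
        rintro (z | u) hz
        · -- hz : ¬ N[z] ⊆ N[w]; goal : Adj v z
          by_contra hvz
          exact hz (htw.2.2 z hvz)
        · -- hz : ¬ TwoOvl w u ; goal : ¬ N[v] ⊆ N[u]
          intro hvu
          exact hz (star hu htw.2 (le_refl _) hvu w.2)
    · -- comp2 : ∀ y, ¬ Adj (inl v) y → N[y] ⊆ N[inr v]
      rintro (w | w) hy
      · -- hy : ¬ Adj v w
        rintro (z | u) hz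
        · -- hz : Adj w z ; goal ¬ N[z] ⊆ N[v]
          intro hzv
          exact hy (hzv (G.symm _ _ hz))
        · -- hz : ¬ N[w] ⊆ N[u] ; goal : ¬¬ TwoOvl v u → False, i.e. ¬ TwoOvl v u
          intro htw
          exact hz (htw.2.2 w hy)
      · -- hy : ¬¬ (N[v] ⊆ N[w]) i.e. N[v] ⊆ N[w]
        have hvw : G.nbhd v.1 ⊆ G.nbhd w.1 := not_not.mp hy
        rintro (z | u) hz
        · intro hzv
          exact hz (hzv.trans hvw)
        · -- hz : ¬ TwoOvl w u ; goal ¬ TwoOvl v u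
          intro htw
          exact hz (two_symm (star hu htw.2 (le_refl _) hvw u.2))
  · -- not adjacent
    intro h
    exact (show ¬ G.nbhd v.1 ⊆ G.nbhd v.1 from h) (le_refl _)

lemma ext_circ (G : LoopGraph V) (hu : ∀ u, ¬ G.Universal u) :
    (ext G).CircularlyPaired := by
  rintro (v | s)
  · by_cases hv : ∃ u, G.CircularPair v u
    · obtain ⟨u, hcp⟩ := hv
      exact ⟨.inl u, (ext_span_iff G hu).2 hcp.1, hcp.2⟩
    · exact ⟨.inr ⟨v, hv⟩, ext_pair G hu ⟨v, hv⟩⟩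
  · exact ⟨.inl s.1, cp_symm (ext_pair G hu s)⟩

end CCU
namespace CCU
open LoopGraph

variable {V W : Type}

/-- delete a vertex -/
def del (H : LoopGraph W) (b : W) : LoopGraph {w : W // w ≠ b} where
  Adj x y := H.Adj x.1 y.1
  symm _ _ h := H.symm _ _ h
  refl _ := H.refl _

section Del
variable {H : LoopGraph W} {a b : W} (hne : a ≠ b) (heq : H.nbhd a = H.nbhd b)

include heq in
lemma twin_adj (x : W) : H.Adj a x ↔ H.Adj b x := Set.ext_iff.mp heq x

include hne heq in
lemma del_le_iff {x y : {w : W // w ≠ b}} :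
    (del H b).nbhd x ⊆ (del H b).nbhd y ↔ H.nbhd x.1 ⊆ H.nbhd y.1 := by
  constructor
  · intro h z hz
    by_cases hzb : z = b
    · rw [hzb] at hz ⊢
      have hxa : H.Adj x.1 a := H.symm _ _ ((twin_adj heq x.1).2 (H.symm _ _ hz))
      have := h (show (⟨a, hne⟩ : {w : W // w ≠ b}) ∈ (del H b).nbhd x from hxa)
      exact H.symm _ _ ((twin_adj heq y.1).1 (H.symm _ _ this))
    · exact h (show (⟨z, hzb⟩ : {w : W // w ≠ b}) ∈ (del H b).nbhd x from hz)
  · intro h z hz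
    exact h hz

include hne heq in
lemma del_span_iff {x y : {w : W // w ≠ b}} :
    (del H b).SpanningPair x y ↔ H.SpanningPair x.1 y.1 := by
  constructor
  · intro h
    constructor
    · intro z hz
      by_cases hzb : z = b
      · rw [hzb] at hz ⊢
        have hya : ¬ H.Adj y.1 a := fun h2 => hz (H.symm _ _ ((twin_adj heq y.1).1 (H.symm _ _ h2)))
        have := (del_le_iff hne heq).1 (h.1 ⟨a, hne⟩ hya)
        intro w hw
        exact this (heq ▸ hw : w ∈ H.nbhd a)
      · exact (del_le_iff hne heq).1 (h.1 ⟨z, hzb⟩ hz)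
    · intro z hz
      by_cases hzb : z = b
      · rw [hzb] at hz ⊢
        have hxa : ¬ H.Adj x.1 a := fun h2 => hz (H.symm _ _ ((twin_adj heq x.1).1 (H.symm _ _ h2)))
        have := (del_le_iff hne heq).1 (h.2 ⟨a, hne⟩ hxa)
        intro w hw
        exact this (heq ▸ hw : w ∈ H.nbhd a)
      · exact (del_le_iff hne heq).1 (h.2 ⟨z, hzb⟩ hz)
  · intro h
    constructor
    · intro z hz w hw
      exact h.1 z.1 hz hw
    · intro z hz w hw
      exact h.2 z.1 hz hw

end Del

/-- a circularly paired graph has no universal vertex -/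
lemma no_universal_of_cp {H : LoopGraph W} (hcp : H.CircularlyPaired) (w : W) :
    ¬ H.Universal w := by
  intro hU
  obtain ⟨v, hv⟩ := hcp w
  exact hv.2 (hU v)

/-- a minimum circular completion has no true twins -/
lemma completion_no_twins [Fintype V] (G : LoopGraph V)
    (ht : ∀ c d, ¬ G.TrueTwins c d) (H : LoopGraph W) (f : V → W)
    (h : G.IsCircularCompletion H f) : ∀ c d, ¬ H.TrueTwins c d := by
  obtain ⟨hFin, ⟨hinj, hind⟩, htypes, hcp, hmin⟩ := h
  -- helper: if a,b are twins and b is not in the range of f, contradiction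
  have key : ∀ a b : W, a ≠ b → H.nbhd a = H.nbhd b → (¬ ∃ v, f v = b) → False := by
    intro a b hne heq hbr
    have hfb : ∀ v, f v ≠ b := fun v hv => hbr ⟨v, hv⟩
    set f' : V → {w : W // w ≠ b} := fun v => ⟨f v, hfb v⟩ with hf'
    have hemb' : G.InducedEmb (del H b) f' := by
      constructor
      · intro u v huv
        exact hinj (congrArg Subtype.val huv)
      · intro u v
        exact hind u v
    have htypes' : G.SameEdgeTypes (del H b) f' := by
      intro u v huv
      obtain ⟨h1, h2, h3⟩ := htypes u v huv
      have hadj : (del H b).Adj (f' u) (f' v) ↔ H.Adj (f u) (f v) := Iff.rfl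
      have hl1 := del_le_iff hne heq (x := f' u) (y := f' v)
      have hl2 := del_le_iff hne heq (x := f' v) (y := f' u)
      have hsp := del_span_iff hne heq (x := f' u) (y := f' v)
      have hovl : (del H b).Overlaps (f' u) (f' v) ↔ H.Overlaps (f u) (f v) := by
        unfold LoopGraph.Overlaps
        rw [hadj, hl1, hl2]
      refine ⟨?_, ?_, ?_⟩
      · rw [h1]; unfold LoopGraph.InclusionEdge; rw [hadj, hl1, hl2]
      · rw [h2]; unfold LoopGraph.OneOverlapEdge; rw [hovl, hsp]
      · rw [h3]; unfold LoopGraph.TwoOverlapEdge; rw [hovl, hsp]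
    have hcp' : (del H b).CircularlyPaired := by
      intro w
      obtain ⟨v, hv⟩ := hcp w.1
      by_cases hvb : v = b
      · subst hvb
        have hwa : ¬ H.Adj w.1 a := fun h2 => hv.2 (H.symm _ _ ((twin_adj heq w.1).1 (H.symm _ _ h2)))
        have hsp : H.SpanningPair w.1 a := by
          constructor
          · intro x hx
            exact hv.1.1 x (fun h2 => hx ((twin_adj heq x).2 h2))
          · intro y hy
            exact heq ▸ (hv.1.2 y hy)
        exact ⟨⟨a, hne⟩, (del_span_iff hne heq).2 hsp, hwa⟩
      · exact ⟨⟨v, hvb⟩, (del_span_iff hne heq).2 hv.1, hv.2⟩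
    have hFin' : Finite {w : W // w ≠ b} := Subtype.finite
    have hle := hmin _ (del H b) f' hFin' hemb' htypes' hcp'
    have : Nat.card {w : W // w ≠ b} < Nat.card W := by
      have : Fintype W := Fintype.ofFinite W
      classical
      rw [Nat.card_eq_fintype_card, Nat.card_eq_fintype_card]
      exact Fintype.card_subtype_lt (x := b) (by simp)
    omega
  intro a b hab
  obtain ⟨hne, heq⟩ := hab
  by_cases hbr : ∃ v, f v = b
  · by_cases har : ∃ v, f v = a
    · obtain ⟨va, hva⟩ := har
      obtain ⟨vb, hvb⟩ := hbr
      apply ht va vb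
      constructor
      · intro h2
        apply hne
        rw [← hva, ← hvb, h2]
      · ext x
        have h3 : H.Adj (f va) (f x) ↔ H.Adj (f vb) (f x) := by
          rw [hva, hvb]
          exact twin_adj heq (f x)
        constructor
        · intro hx; exact (hind vb x).2 (h3.1 ((hind va x).1 hx))
        · intro hx; exact (hind va x).2 (h3.2 ((hind vb x).1 hx))
    · exact key b a (Ne.symm hne) heq.symm har
  · exact key a b hne heq hbr

end CCU
namespace CCU
open LoopGraph

variable {V W : Type}

noncomputable def partner {H : LoopGraph W} (hcp : H.CircularlyPaired) (w : W) : W :=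
  (hcp w).choose

lemma partner_spec {H : LoopGraph W} (hcp : H.CircularlyPaired) (w : W) :
    H.CircularPair w (partner hcp w) := (hcp w).choose_spec

lemma partner_unique {H : LoopGraph W} (htw : ∀ a b, ¬ H.TrueTwins a b) {u v v' : W}
    (h : H.CircularPair u v) (h' : H.CircularPair u v') : v = v' := by
  by_contra hne
  apply htw v v'
  exact ⟨hne, Set.Subset.antisymm (h'.1.2 v h.2) (h.1.2 v' h'.2)⟩

lemma partner_invol {H : LoopGraph W} (hcp : H.CircularlyPaired)
    (htw : ∀ a b, ¬ H.TrueTwins a b) (w : W) :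
    partner hcp (partner hcp w) = w :=
  partner_unique htw (partner_spec hcp (partner hcp w)) (cp_symm (partner_spec hcp w))

lemma adj_partner {H : LoopGraph W} (hcp : H.CircularlyPaired) {w x : W} :
    H.Adj (partner hcp w) x ↔ ¬ H.nbhd x ⊆ H.nbhd w := by
  constructor
  · intro h hle
    exact (partner_spec hcp w).2 (hle (H.symm _ _ h))
  · intro h
    by_contra h2
    exact h ((partner_spec hcp w).1.1 x h2)

lemma partner_antitone {H : LoopGraph W} (hcp : H.CircularlyPaired) {x y : W}
    (hxy : H.nbhd x ⊆ H.nbhd y) :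
    H.nbhd (partner hcp y) ⊆ H.nbhd (partner hcp x) := by
  intro z hz
  have h1 := (adj_partner hcp).1 hz
  exact (adj_partner hcp).2 (fun h => h1 (h.trans hxy))

lemma le_of_nonadj_partner {H : LoopGraph W} (hcp : H.CircularlyPaired)
    (htw : ∀ a b, ¬ H.TrueTwins a b) {v x : W} (hx : ¬ H.Adj v x) :
    H.nbhd x ⊆ H.nbhd (partner hcp v) := by
  by_contra h2
  have h3 := (adj_partner hcp (w := partner hcp v) (x := x)).2 h2
  rw [partner_invol hcp htw] at h3
  exact hx h3

lemma span_iff_le {H : LoopGraph W} (hcp : H.CircularlyPaired)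
    (htw : ∀ a b, ¬ H.TrueTwins a b) {u v : W} :
    H.SpanningPair u v ↔ H.nbhd (partner hcp v) ⊆ H.nbhd u := by
  constructor
  · intro h
    exact h.1 (partner hcp v) (partner_spec hcp v).2
  · intro hle
    have hle2 : H.nbhd (partner hcp u) ⊆ H.nbhd v := by
      have h4 := partner_antitone hcp hle
      rwa [partner_invol hcp htw] at h4
    constructor
    · intro x hx
      exact (le_of_nonadj_partner hcp htw hx).trans hle
    · intro y hy
      exact (le_of_nonadj_partner hcp htw hy).trans hle2

lemma no_le_partner {H : LoopGraph W} (hcp : H.CircularlyPaired)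
    (htw : ∀ a b, ¬ H.TrueTwins a b) (hnu : ∀ w, ¬ H.Universal w) (v : W) :
    ¬ H.nbhd (partner hcp v) ⊆ H.nbhd v := by
  intro h
  apply hnu v
  intro x
  by_contra hvx
  exact hvx ((le_of_nonadj_partner hcp htw hvx).trans h (H.refl x))

section Emb
variable {G : LoopGraph V} {H : LoopGraph W} {f : V → W}

lemma le_restrict (hind : ∀ u v, G.Adj u v ↔ H.Adj (f u) (f v)) {a b : V}
    (h : H.nbhd (f a) ⊆ H.nbhd (f b)) : G.nbhd a ⊆ G.nbhd b := by
  intro x hx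
  exact (hind b x).2 (h ((hind a x).1 hx))

lemma le_transfer (ht : ∀ a b, ¬ G.TrueTwins a b)
    (hind : ∀ u v, G.Adj u v ↔ H.Adj (f u) (f v)) (htypes : G.SameEdgeTypes H f) (a b : V) :
    H.nbhd (f a) ⊆ H.nbhd (f b) ↔ G.nbhd a ⊆ G.nbhd b := by
  constructor
  · exact le_restrict hind
  · intro hG
    by_cases hab : a = b
    · subst hab; exact le_refl _
    have hadj : G.Adj a b := G.symm _ _ (hG (G.refl a))
    have hincl : H.InclusionEdge (f a) (f b) := ((htypes a b hadj).1).1 ⟨hadj, Or.inl hG⟩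
    rcases hincl.2 with h | h
    · exact h
    · exact absurd ⟨hab, Set.Subset.antisymm hG (le_restrict hind h)⟩ (ht a b)

lemma span_restrict (hind : ∀ u v, G.Adj u v ↔ H.Adj (f u) (f v)) {a b : V}
    (h : H.SpanningPair (f a) (f b)) : G.SpanningPair a b := by
  constructor
  · intro x hx
    exact le_restrict hind (h.1 (f x) (fun h2 => hx ((hind b x).2 h2)))
  · intro y hy
    exact le_restrict hind (h.2 (f y) (fun h2 => hy ((hind a y).2 h2)))

end Emb

end CCU
namespace CCU
open LoopGraph

variable {V W : Type}

lemma completion_iso [Fintype V] (G : LoopGraph V) (hu : ∀ u, ¬ G.Universal u)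
    (ht : ∀ a b, ¬ G.TrueTwins a b) (H : LoopGraph W) (f : V → W)
    (h : G.IsCircularCompletion H f) :
    ∃ ι : (V ⊕ UnpairedT G) ≃ W,
      (∀ x y, (ext G).Adj x y ↔ H.Adj (ι x) (ι y)) ∧ ∀ v, ι (Sum.inl v) = f v := by
  have htw := completion_no_twins G ht H f h
  obtain ⟨hFin, ⟨hinj, hind⟩, htypes, hcp, hmin⟩ := h
  haveI : Finite W := hFin
  have hnu : ∀ w, ¬ H.Universal w := no_universal_of_cp hcp
  have hT := le_transfer ht hind htypes
  set ι0 : V ⊕ UnpairedT G → W := Sum.elim f (fun s => partner hcp (f s.1)) with hι0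
  -- partners of unpaired vertices are new vertices
  have hninr : ∀ (s : UnpairedT G) (v : V), partner hcp (f s.1) ≠ f v := by
    intro s v he
    apply s.2
    have hpair : H.CircularPair (f s.1) (f v) := by
      rw [← he]; exact partner_spec hcp (f s.1)
    exact ⟨v, span_restrict hind hpair.1, fun h2 => hpair.2 ((hind _ _).1 h2)⟩
  have hinj0 : Function.Injective ι0 := by
    rintro (a | s) (b | t) he
    · exact congrArg Sum.inl (hinj he)
    · exact absurd he.symm (hninr t a)
    · exact absurd he (hninr s b)
    · have he2 : f s.1 = f t.1 := by
        have he' : partner hcp (f s.1) = partner hcp (f t.1) := he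
        have h3 := congrArg (partner hcp) he'
        rwa [partner_invol hcp htw, partner_invol hcp htw] at h3
      exact congrArg Sum.inr (Subtype.ext (hinj he2))
  have hcard : Nat.card W ≤ Nat.card (V ⊕ UnpairedT G) :=
    hmin _ (ext G) Sum.inl inferInstance ⟨Sum.inl_injective, fun u v => Iff.rfl⟩
      (ext_sameEdgeTypes G hu) (ext_circ G hu)
  have hbij : Function.Bijective ι0 :=
    (Nat.bijective_iff_injective_and_card ι0).2
      ⟨hinj0, le_antisymm (Nat.card_le_card_of_injective ι0 hinj0) hcard⟩
  -- key: spanning pairs between images of unpaired vertices are 2-overlap edges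
  have hkey : ∀ s t : UnpairedT G,
      H.SpanningPair (f s.1) (f t.1) ↔ G.TwoOverlapEdge s.1 t.1 := by
    intro s t
    constructor
    · intro hS
      by_cases hadj : G.Adj s.1 t.1
      · by_cases h1 : G.nbhd s.1 ⊆ G.nbhd t.1
        · exfalso
          have hH := (hT s.1 t.1).2 h1
          have h5 := (span_iff_le hcp htw).1 hS
          exact no_le_partner hcp htw hnu (f t.1) (h5.trans hH)
        · by_cases h2 : G.nbhd t.1 ⊆ G.nbhd s.1
          · exfalso
            have hH := (hT t.1 s.1).2 h2
            have h5 := (span_iff_le hcp htw).1 (span_symm hS)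
            exact no_le_partner hcp htw hnu (f s.1) (h5.trans hH)
          · have hovlH : H.Overlaps (f s.1) (f t.1) :=
              ⟨(hind _ _).1 hadj, fun h3 => h1 ((hT _ _).1 h3), fun h3 => h2 ((hT _ _).1 h3)⟩
            exact ((htypes s.1 t.1 hadj).2.2).2 ⟨hovlH, hS⟩
      · exfalso
        exact s.2 ⟨t.1, span_restrict hind hS, hadj⟩
    · intro h2
      exact (((htypes s.1 t.1 h2.1.1).2.2).1 h2).2
  refine ⟨Equiv.ofBijective ι0 hbij, ?_, fun v => rfl⟩
  rintro (a | s) (b | t)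
  · exact hind a b
  · show (¬ G.nbhd a ⊆ G.nbhd t.1) ↔ H.Adj (f a) (partner hcp (f t.1))
    rw [← hT a t.1]
    constructor
    · intro h3
      exact H.symm _ _ ((adj_partner hcp).2 h3)
    · intro h3
      exact (adj_partner hcp).1 (H.symm _ _ h3)
  · show (¬ G.nbhd b ⊆ G.nbhd s.1) ↔ H.Adj (partner hcp (f s.1)) (f b)
    rw [← hT b s.1]
    exact (adj_partner hcp).symm
  · show (¬ G.TwoOverlapEdge s.1 t.1) ↔ H.Adj (partner hcp (f s.1)) (partner hcp (f t.1))
    rw [adj_partner hcp]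
    rw [← span_iff_le hcp htw]
    rw [hkey s t]
end CCU
/-- Any two circular completions of `G` are isomorphic via an
isomorphism that is the identity on the vertices of `G`. -/
theorem circularCompletion_unique
    {V W₁ W₂ : Type} [Fintype V] (G : LoopGraph V)
    (hu : ∀ u, ¬ G.Universal u) (ht : ∀ a b, ¬ G.TrueTwins a b)
    (H₁ : LoopGraph W₁) (f₁ : V → W₁) (H₂ : LoopGraph W₂) (f₂ : V → W₂)
    (h₁ : G.IsCircularCompletion H₁ f₁) (h₂ : G.IsCircularCompletion H₂ f₂) :
    ∃ φ : W₁ ≃ W₂, (∀ a b, H₁.Adj a b ↔ H₂.Adj (φ a) (φ b)) ∧ ∀ v, φ (f₁ v) = f₂ v := by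
  obtain ⟨ι₁, hι₁, hf₁⟩ := CCU.completion_iso G hu ht H₁ f₁ h₁
  obtain ⟨ι₂, hι₂, hf₂⟩ := CCU.completion_iso G hu ht H₂ f₂ h₂
  refine ⟨ι₁.symm.trans ι₂, ?_, ?_⟩
  · intro a b
    have h3 := hι₁ (ι₁.symm a) (ι₁.symm b)
    rw [ι₁.apply_symm_apply, ι₁.apply_symm_apply] at h3
    rw [← h3]
    exact hι₂ _ _
  · intro v
    simp only [Equiv.trans_apply]
    rw [← hf₁ v, ι₁.symm_apply_apply, hf₂ v]
end

section
/- Let G be an edge-labelled graph and let A, B, C be Δ-implication classes of G such that C⁻¹ ≠ A and A ≠ B. Suppose there are vertices a, b, c with (a,b) ∈ C, (b,c) ∈ A, and (a,c) ∈ B. Then: (1) for every (u,v) ∈ A, we have (a,u) ∈ C and (a,v) ∈ B; and (2) no pair in A is incident to a. -/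
namespace ELGraph

variable {V : Type} (G : ELGraph V)

lemma avoidsEdge_symm' {z u v : V} (h : G.AvoidsEdge z u v) : G.AvoidsEdge z v u :=
  ⟨h.2.1, h.1, fun h1 h2 h3 => h.2.2 h2 h1 (G.ovl_symm _ _ h3)⟩

/-- One reversible Δ-step: change one coordinate. -/
def Step' (p q : V × V) : Prop :=
  (p.1 = q.1 ∧ G.Adj p.2 q.2 ∧ G.AvoidsEdge p.1 p.2 q.2) ∨
  (p.2 = q.2 ∧ G.Adj p.1 q.1 ∧ G.AvoidsEdge p.2 p.1 q.1)

lemma step_symm' {p q : V × V} (h : G.Step' p q) : G.Step' q p := by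
  obtain ⟨h1, h2, h3⟩ | ⟨h1, h2, h3⟩ := h
  · refine Or.inl ⟨h1.symm, G.symm _ _ h2, ?_⟩
    rw [← h1]; exact G.avoidsEdge_symm' h3
  · refine Or.inr ⟨h1.symm, G.symm _ _ h2, ?_⟩
    rw [← h1]; exact G.avoidsEdge_symm' h3

lemma step_related' {p q : V × V} (h : G.Step' p q) : G.Related p q := by
  obtain ⟨h1, h2, h3⟩ | ⟨h1, h2, h3⟩ := h
  · refine ⟨1, one_pos, (fun _ => p.1), (fun i => if i = 0 then p.2 else q.2),
      fun i _ => G.refl p.1, ?_, rfl, by simp, h1, by simp, ?_⟩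
    · intro i hi
      have : i = 0 := by omega
      subst this
      simpa using h2
    · intro i hi
      have : i = 0 := by omega
      subst this
      constructor
      · simpa using h3
      · refine ⟨?_, ?_, ?_⟩ <;> simp only [if_neg one_ne_zero]
        · exact fun hh => G.ovl_symm _ _ (h3.2.1 (G.symm _ _ hh))
        · exact fun hh => G.ovl_symm _ _ (h3.2.1 (G.symm _ _ hh))
        · exact fun _ _ hh => G.ovl_irrefl _ hh
  · refine ⟨1, one_pos, (fun i => if i = 0 then p.1 else q.1), (fun _ => p.2),
      ?_, fun i _ => G.refl p.2, rfl, rfl, by simp [h1], ?_, ?_⟩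
    · intro i hi
      have : i = 0 := by omega
      subst this
      simpa using h2
    · exact h1
    · intro i hi
      have : i = 0 := by omega
      subst this
      constructor
      · refine ⟨?_, ?_, ?_⟩ <;> simp only [if_pos rfl]
        · exact fun hh => G.ovl_symm _ _ (h3.1 (G.symm _ _ hh))
        · exact fun hh => G.ovl_symm _ _ (h3.1 (G.symm _ _ hh))
        · exact fun _ _ hh => G.ovl_irrefl _ hh
      · simpa using h3

lemma related_trans' {p q r : V × V} (h1 : G.Related p q) (h2 : G.Related q r) :
    G.Related p r := by
  obtain ⟨k1, hk1, P1, Q1, wP1, wQ1, hP10, hQ10, hP1k, hQ1k, hA1⟩ := h1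
  obtain ⟨k2, hk2, P2, Q2, wP2, wQ2, hP20, hQ20, hP2k, hQ2k, hA2⟩ := h2
  set P : ℕ → V := fun i => if i < k1 then P1 i else P2 (i - k1) with hPdef
  set Q : ℕ → V := fun i => if i < k1 then Q1 i else Q2 (i - k1) with hQdef
  have hPle : ∀ i ≤ k1, P i = P1 i := by
    intro i hi
    rcases lt_or_eq_of_le hi with h | h
    · simp [hPdef, h]
    · subst h
      simp only [hPdef]
      rw [if_neg (lt_irrefl i), Nat.sub_self, hP20, hP1k]
  have hQle : ∀ i ≤ k1, Q i = Q1 i := by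
    intro i hi
    rcases lt_or_eq_of_le hi with h | h
    · simp [hQdef, h]
    · subst h
      simp only [hQdef]
      rw [if_neg (lt_irrefl i), Nat.sub_self, hQ20, hQ1k]
  have hPge : ∀ i, k1 ≤ i → P i = P2 (i - k1) := by
    intro i hi
    simp only [hPdef]
    rw [if_neg (not_lt.2 hi)]
  have hQge : ∀ i, k1 ≤ i → Q i = Q2 (i - k1) := by
    intro i hi
    simp only [hQdef]
    rw [if_neg (not_lt.2 hi)]
  refine ⟨k1 + k2, by omega, P, Q, ?_, ?_, ?_, ?_, ?_, ?_, ?_⟩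
  · intro i hi
    rcases lt_or_ge i k1 with h | h
    · rw [hPle i h.le, hPle (i + 1) (by omega)]
      exact wP1 i h
    · rw [hPge i h, hPge (i + 1) (by omega),
        show i + 1 - k1 = (i - k1) + 1 by omega]
      exact wP2 _ (by omega)
  · intro i hi
    rcases lt_or_ge i k1 with h | h
    · rw [hQle i h.le, hQle (i + 1) (by omega)]
      exact wQ1 i h
    · rw [hQge i h, hQge (i + 1) (by omega),
        show i + 1 - k1 = (i - k1) + 1 by omega]
      exact wQ2 _ (by omega)
  · rw [hPle 0 (by omega)]; exact hP10
  · rw [hQle 0 (by omega)]; exact hQ10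
  · rw [hPge (k1 + k2) (by omega), show k1 + k2 - k1 = k2 by omega]; exact hP2k
  · rw [hQge (k1 + k2) (by omega), show k1 + k2 - k1 = k2 by omega]; exact hQ2k
  · intro i hi
    rcases lt_or_ge i k1 with h | h
    · rw [hPle i h.le, hPle (i + 1) (by omega), hQle i h.le, hQle (i + 1) (by omega)]
      exact hA1 i h
    · rw [hPge i h, hPge (i + 1) (by omega), hQge i h, hQge (i + 1) (by omega),
        show i + 1 - k1 = (i - k1) + 1 by omega]
      exact hA2 _ (by omega)

lemma related_swap' {p q : V × V} (h : G.Related p q) :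
    G.Related p.swap q.swap := by
  obtain ⟨k, hk, P, Q, wP, wQ, hP0, hQ0, hPk, hQk, hAv⟩ := h
  refine ⟨2 * k, by omega, fun i => Q ((i + 1) / 2), fun i => P (i / 2),
    ?_, ?_, ?_, ?_, ?_, ?_, ?_⟩
  · intro i hi
    dsimp only
    rcases Nat.even_or_odd i with ⟨j, hj⟩ | ⟨j, hj⟩
    · subst hj
      rw [show (j + j + 1) / 2 = j by omega, show (j + j + 1 + 1) / 2 = j + 1 by omega]
      exact wQ j (by omega)
    · subst hj
      rw [show (2 * j + 1 + 1) / 2 = j + 1 by omega,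
        show (2 * j + 1 + 1 + 1) / 2 = j + 1 by omega]
      exact G.refl _
  · intro i hi
    dsimp only
    rcases Nat.even_or_odd i with ⟨j, hj⟩ | ⟨j, hj⟩
    · subst hj
      rw [show (j + j) / 2 = j by omega, show (j + j + 1) / 2 = j by omega]
      exact G.refl _
    · subst hj
      rw [show (2 * j + 1) / 2 = j by omega, show (2 * j + 1 + 1) / 2 = j + 1 by omega]
      exact wP j (by omega)
  · dsimp only
    rw [show (0 + 1) / 2 = 0 by omega, hQ0, Prod.fst_swap]
  · dsimp only
    rw [show (0 : ℕ) / 2 = 0 by omega, hP0, Prod.snd_swap]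
  · dsimp only
    rw [show (2 * k + 1) / 2 = k by omega, hQk, Prod.fst_swap]
  · dsimp only
    rw [show (2 * k) / 2 = k by omega, hPk, Prod.snd_swap]
  · intro i hi
    dsimp only
    rcases Nat.even_or_odd i with ⟨j, hj⟩ | ⟨j, hj⟩
    · subst hj
      have hjk : j < k := by omega
      rw [show (j + j + 1) / 2 = j by omega, show (j + j) / 2 = j by omega,
        show (j + j + 1 + 1) / 2 = j + 1 by omega]
      constructor
      · refine ⟨?_, ?_, ?_⟩
        · exact fun hh => G.ovl_symm _ _ ((hAv j hjk).1.1 (G.symm _ _ hh))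
        · exact fun hh => G.ovl_symm _ _ ((hAv j hjk).1.1 (G.symm _ _ hh))
        · exact fun _ _ hh => G.ovl_irrefl _ hh
      · exact (hAv j hjk).1
  
    · subst hj
      have hjk : j < k := by omega
      rw [show (2 * j + 1 + 1) / 2 = j + 1 by omega, show (2 * j + 1) / 2 = j by omega,
        show (2 * j + 1 + 1 + 1) / 2 = j + 1 by omega]
      constructor
      · exact (hAv j hjk).2
      · refine ⟨?_, ?_, ?_⟩
        · exact fun hh => G.ovl_symm _ _ ((hAv j hjk).2.2.1 (G.symm _ _ hh))
        · exact fun hh => G.ovl_symm _ _ ((hAv j hjk).2.2.1 (G.symm _ _ hh))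
        · exact fun _ _ hh => G.ovl_irrefl _ hh

lemma mem_adj_ovl' {A : Set (V × V)} {p : V × V} (hA : G.IsDeltaClass A)
    (hp : p ∈ A) : G.Adj p.1 p.2 → G.Ovl p.1 p.2 := by
  obtain ⟨k, hk, P, Q, wP, wQ, hP0, hQ0, hPk, hQk, hAv⟩ := hA.2.1 p hp p hp
  have h := (hAv 0 hk).1.1
  rwa [hP0, hQ0] at h

lemma mem_ne' {A : Set (V × V)} {p : V × V} (hA : G.IsDeltaClass A)
    (hp : p ∈ A) : p.1 ≠ p.2 := by
  intro h
  have h2 := G.mem_adj_ovl' hA hp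
  rw [h] at h2
  exact G.ovl_irrefl p.2 (h2 (G.refl p.2))

lemma class_eq' {A B : Set (V × V)} {p : V × V} (hA : G.IsDeltaClass A)
    (hB : G.IsDeltaClass B) (hpA : p ∈ A) (hpB : p ∈ B) : A = B := by
  have hU : ∀ q ∈ A ∪ B, ∀ r ∈ A ∪ B, G.Related q r := by
    rintro q (hq | hq) r (hr | hr)
    · exact hA.2.1 q hq r hr
    · exact G.related_trans' (hA.2.1 q hq p hpA) (hB.2.1 p hpB r hr)
    · exact G.related_trans' (hB.2.1 q hq p hpB) (hA.2.1 p hpA r hr)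
    · exact hB.2.1 q hq r hr
  have h1 := hA.2.2 (A ∪ B) Set.subset_union_left hU
  have h2 := hB.2.2 (A ∪ B) Set.subset_union_right hU
  exact h1.symm.trans h2

lemma class_step' {A : Set (V × V)} {p q : V × V} (hA : G.IsDeltaClass A)
    (hp : p ∈ A) (hs : G.Step' p q) : q ∈ A := by
  have hpq := G.step_related' hs
  have hqp := G.step_related' (G.step_symm' hs)
  have hU : ∀ r ∈ A ∪ {q}, ∀ s ∈ A ∪ {q}, G.Related r s := by
    rintro r (hr | hr) s (hs' | hs')
    · exact hA.2.1 r hr s hs'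
    · rcases hs'
      exact G.related_trans' (hA.2.1 r hr p hp) hpq
    · rcases hr
      exact G.related_trans' hqp (hA.2.1 p hp s hs')
    · rcases hr; rcases hs'
      exact G.related_trans' hqp hpq
  have h1 := hA.2.2 (A ∪ {q}) Set.subset_union_left hU
  rw [← h1]
  exact Or.inr rfl

lemma inv_class' {C : Set (V × V)} (hC : G.IsDeltaClass C) :
    G.IsDeltaClass (ELGraph.inv C) := by
  obtain ⟨p, hp⟩ := hC.1
  refine ⟨⟨p.swap, by simp [ELGraph.inv, hp]⟩, ?_, ?_⟩
  · intro q hq r hr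
    have := G.related_swap' (hC.2.1 q.swap hq r.swap hr)
    simpa using this
  · intro B hsub hrel
    have hC' : ELGraph.inv B = C := by
      apply hC.2.2
      · intro q hq
        show q.swap ∈ B
        exact hsub (show q.swap ∈ ELGraph.inv C by simpa [ELGraph.inv] using hq)
      · intro q hq r hr
        have := G.related_swap' (hrel q.swap hq r.swap hr)
        simpa using this
    ext q
    constructor
    · intro hq
      show q.swap ∈ C
      rw [← hC']
      show q.swap.swap ∈ B
      simpa using hq
    · intro hq
      have : q.swap ∈ C := hq
      rw [← hC'] at this
      simpa [ELGraph.inv] using this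

section KeySteps

variable {A B C : Set (V × V)}

lemma key_step1 (hA : G.IsDeltaClass A) (hB : G.IsDeltaClass B) (hC : G.IsDeltaClass C)
    (hCA : ELGraph.inv C ≠ A) (hAB : A ≠ B) {a x y y' : V}
    (hxy : (x, y) ∈ A) (hax : (a, x) ∈ C) (hay : (a, y) ∈ B)
    (hadj : G.Adj y y') (hav : G.AvoidsEdge x y y') :
    (x, y') ∈ A ∧ (a, y') ∈ B := by
  have hxy' : (x, y') ∈ A := G.class_step' hA hxy (Or.inl ⟨rfl, hadj, hav⟩)
  have haxovl : G.Adj a x → G.Ovl a x := G.mem_adj_ovl' hC hax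
  have hayovl : G.Adj a y → G.Ovl a y := G.mem_adj_ovl' hB hay
  have hxaovl : G.Adj x a → G.Ovl x a := fun h => G.ovl_symm a x (haxovl (G.symm _ _ h))
  have contraC : (x, a) ∈ A → False := fun h =>
    hCA (G.class_eq' (G.inv_class' hC) hA (show ((x, a) : V × V) ∈ ELGraph.inv C from hax) h)
  have contraB : (a, y) ∈ A → False := fun h => hAB (G.class_eq' hA hB h hay)
  have c2 : G.Adj a y' → G.Ovl a y' := by
    intro hadj'
    by_contra hno
    apply contraC
    refine G.class_step' hA hxy' (Or.inl ⟨rfl, G.symm a y' hadj', ?_, ?_, ?_⟩)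
    · exact hav.2.1
    · exact hxaovl
    · exact fun _ _ ho => hno (G.ovl_symm _ _ ho)
  have c3 : G.Ovl a y → G.Ovl a y' → ¬ G.Ovl y y' := by
    intro h1 h2 h3
    by_cases hxyo : G.Ovl x y
    · by_cases hxy'o : G.Ovl x y'
      · exact hav.2.2 hxyo hxy'o h3
      · have hnadj : ¬ G.Adj x y' := fun h => hxy'o (hav.2.1 h)
        apply contraC
        refine G.class_step' hA hxy' (Or.inl ⟨rfl, G.symm a y' (G.ovl_adj _ _ h2), ?_, ?_, ?_⟩)
        · exact fun h => absurd h hnadj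
        · exact hxaovl
        · exact fun ho _ => absurd ho hxy'o
    · have hnadj : ¬ G.Adj x y := fun h => hxyo (hav.1 h)
      by_cases hxa : G.Adj x a
      · apply contraB
        refine G.class_step' hA hxy (Or.inr ⟨rfl, hxa, ?_, ?_, ?_⟩)
        · exact fun h => absurd (G.symm _ _ h) hnadj
        · exact fun _ => G.ovl_symm _ _ h1
        · exact fun ho _ => absurd ho (fun hh => hxyo (G.ovl_symm _ _ hh))
      · apply contraC
        refine G.class_step' hA hxy (Or.inl ⟨rfl, G.symm a y (G.ovl_adj _ _ h1), ?_, ?_, ?_⟩)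
        · exact fun h => absurd h hnadj
        · exact fun h => absurd h hxa
        · exact fun ho _ => absurd ho hxyo
  have hay' : (a, y') ∈ B :=
    G.class_step' hB hay (Or.inl ⟨rfl, hadj, hayovl, c2, c3⟩)
  exact ⟨hxy', hay'⟩

lemma key_step2 (hA : G.IsDeltaClass A) (hB : G.IsDeltaClass B) (hC : G.IsDeltaClass C)
    (hCA : ELGraph.inv C ≠ A) (hAB : A ≠ B) {a x y x' : V}
    (hxy : (x, y) ∈ A) (hax : (a, x) ∈ C) (hay : (a, y) ∈ B)
    (hadj : G.Adj x x') (hav : G.AvoidsEdge y x x') :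
    (x', y) ∈ A ∧ (a, x') ∈ C := by
  have hx'y : (x', y) ∈ A := G.class_step' hA hxy (Or.inr ⟨rfl, hadj, hav⟩)
  have haxovl : G.Adj a x → G.Ovl a x := G.mem_adj_ovl' hC hax
  have hayovl : G.Adj a y → G.Ovl a y := G.mem_adj_ovl' hB hay
  have hyaovl : G.Adj y a → G.Ovl y a := fun h => G.ovl_symm a y (hayovl (G.symm _ _ h))
  have contraC : (x, a) ∈ A → False := fun h =>
    hCA (G.class_eq' (G.inv_class' hC) hA (show ((x, a) : V × V) ∈ ELGraph.inv C from hax) h)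
  have contraB : (a, y) ∈ A → False := fun h => hAB (G.class_eq' hA hB h hay)
  have c2 : G.Adj a x' → G.Ovl a x' := by
    intro hadj'
    by_contra hno
    apply contraB
    refine G.class_step' hA hx'y (Or.inr ⟨rfl, G.symm a x' hadj', ?_, ?_, ?_⟩)
    · exact hav.2.1
    · exact hyaovl
    · exact fun _ _ ho => hno (G.ovl_symm _ _ ho)
  have c3 : G.Ovl a x → G.Ovl a x' → ¬ G.Ovl x x' := by
    intro h1 h2 h3
    by_cases hyxo : G.Ovl y x
    · by_cases hyx'o : G.Ovl y x'
      · exact hav.2.2 hyxo hyx'o h3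
      · have hnadj : ¬ G.Adj y x' := fun h => hyx'o (hav.2.1 h)
        apply contraB
        refine G.class_step' hA hx'y (Or.inr ⟨rfl, G.symm a x' (G.ovl_adj _ _ h2), ?_, ?_, ?_⟩)
        · exact fun h => absurd h hnadj
        · exact hyaovl
        · exact fun ho _ => absurd ho hyx'o
    · have hnadj : ¬ G.Adj y x := fun h => hyxo (hav.1 h)
      by_cases hya : G.Adj y a
      · apply contraC
        refine G.class_step' hA hxy (Or.inl ⟨rfl, hya, ?_, ?_, ?_⟩)
        · exact fun h => absurd (G.symm _ _ h) hnadj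
        · exact fun _ => G.ovl_symm _ _ h1
        · exact fun ho _ => absurd ho (fun hh => hyxo (G.ovl_symm _ _ hh))
      · apply contraB
        refine G.class_step' hA hxy (Or.inr ⟨rfl, G.symm a x (G.ovl_adj _ _ h1), ?_, ?_, ?_⟩)
        · exact fun h => absurd h hnadj
        · exact fun h => absurd h hya
        · exact fun ho _ => absurd ho hyxo
  have hax' : (a, x') ∈ C :=
    G.class_step' hC hax (Or.inl ⟨rfl, hadj, haxovl, c2, c3⟩)
  exact ⟨hx'y, hax'⟩

end KeySteps

end ELGraph

/-- Let `A, B, C` be Δ-implication classes with `C⁻¹ ≠ A ≠ B` and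
vertices `a, b, c` with `(a,b) ∈ C`, `(b,c) ∈ A`, `(a,c) ∈ B`. Then for every
`(u,v) ∈ A` we have `(a,u) ∈ C` and `(a,v) ∈ B`, and no pair in `A` is incident to `a`. -/
theorem deltaClass_abc
    {V : Type} [Fintype V] (G : ELGraph V) (A B C : Set (V × V))
    (hA : G.IsDeltaClass A) (hB : G.IsDeltaClass B) (hC : G.IsDeltaClass C)
    (hCA : ELGraph.inv C ≠ A) (hAB : A ≠ B)
    (a b c : V) (hab : (a, b) ∈ C) (hbc : (b, c) ∈ A) (hac : (a, c) ∈ B) :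
    (∀ p ∈ A, (a, p.1) ∈ C ∧ (a, p.2) ∈ B) ∧ (∀ p ∈ A, p.1 ≠ a ∧ p.2 ≠ a) := by
  have main : ∀ p ∈ A, (a, p.1) ∈ C ∧ (a, p.2) ∈ B := by
    intro p hp
    obtain ⟨k, hk, P, Q, wP, wQ, hP0, hQ0, hPk, hQk, hAv⟩ := hA.2.1 (b, c) hbc p hp
    have hind : ∀ i, i ≤ k → ((P i, Q i) ∈ A ∧ (a, P i) ∈ C ∧ (a, Q i) ∈ B) := by
      intro i
      induction i with
      | zero =>
        intro _
        rw [hP0, hQ0]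
        exact ⟨hbc, hab, hac⟩
      | succ n ih =>
        intro hn
        have hn' : n < k := hn
        obtain ⟨h1, h2, h3⟩ := ih (le_of_lt hn')
        have havs := hAv n hn'
        have s1 := G.key_step1 hA hB hC hCA hAB h1 h2 h3 (wQ n hn') havs.1
        have s2 := G.key_step2 hA hB hC hCA hAB s1.1 h2 s1.2 (wP n hn') havs.2
        exact ⟨s2.1, s2.2, s1.2⟩
    have hfin := hind k le_rfl
    rw [hPk, hQk] at hfin
    exact ⟨hfin.2.1, hfin.2.2⟩
  refine ⟨main, ?_⟩
  intro p hp
  obtain ⟨h1, h2⟩ := main p hp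
  constructor
  · intro h
    rw [h] at h1
    exact (G.mem_ne' hC h1) rfl
  · intro h
    rw [h] at h2
    exact (G.mem_ne' hB h2) rfl
end
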